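/- arXiv:1710.09049 — 8 statements merged into one kernel-verified Lean document; each statement's English description precedes it below -/
import Mathlib

section
/- If f ∈ L^∞([1,∞)) satisfies M(f) = lim_{x→∞} (1/x)∫₁ˣ f(t)dt = α, then P̄(f) ≥ α, where P̄(f) = lim_{θ→1⁺} limsup_{x→∞} (1/(θx−x))∫ₓ^{θx} f(t)dt. -/
open Filter MeasureTheory Set Topology

/-- The inner limsup in the definition of the sublinear functional `P̄`:
`limsup_{x→∞} (1/(θx−x)) ∫ₓ^{θx} f(t) dt`. -/
noncomputable def innerP (f : ℝ → ℝ) (θ : ℝ) : ℝ :=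
  Filter.limsup (fun x : ℝ => (∫ t in x..(θ * x), f t) / (θ * x - x)) Filter.atTop

lemma intInt_of_bdd (f : ℝ → ℝ) (C : ℝ) (hm : Measurable f)
    (hb : ∀ x ≥ (1 : ℝ), |f x| ≤ C) {x : ℝ} (hx : 1 ≤ x) :
    IntervalIntegrable f MeasureTheory.volume 1 x := by
  rw [intervalIntegrable_iff]
  refine (Integrable.mono' (g := fun _ => C) ((integrableOn_const_iff (C := C)).2 (Or.inr ?_)) hm.aestronglyMeasurable ?_)
  · rw [Set.uIoc]; exact measure_Ioc_lt_top
  refine (ae_restrict_iff' measurableSet_uIoc).2 (ae_of_all _ fun t ht => ?_)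
  rw [Set.uIoc_of_le hx] at ht
  exact hb t ht.1.le

lemma innerP_eq (f : ℝ → ℝ) (C α : ℝ)
    (hm : Measurable f) (hb : ∀ x ≥ (1 : ℝ), |f x| ≤ C)
    (hM : Tendsto (fun x : ℝ => (∫ t in (1 : ℝ)..x, f t) / x) atTop (𝓝 α))
    {θ : ℝ} (hθ : 1 < θ) : innerP f θ = α := by
  set A : ℝ → ℝ := fun x => (∫ t in (1 : ℝ)..x, f t) / x with hA
  have hθ0 : (0 : ℝ) < θ := lt_trans one_pos hθ
  have hθ1 : θ - 1 ≠ 0 := sub_ne_zero.2 (ne_of_gt hθ)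
  have h1 : Tendsto (fun x : ℝ => A (θ * x)) atTop (𝓝 α) :=
    hM.comp (Tendsto.const_mul_atTop hθ0 tendsto_id)
  have h2 : Tendsto (fun x : ℝ => θ / (θ - 1) * A (θ * x) - 1 / (θ - 1) * A x)
      atTop (𝓝 (θ / (θ - 1) * α - 1 / (θ - 1) * α)) :=
    ((h1.const_mul _).sub (hM.const_mul _))
  have hval : θ / (θ - 1) * α - 1 / (θ - 1) * α = α := by field_simp
  rw [hval] at h2
  have heq : ∀ᶠ x : ℝ in atTop,
      (∫ t in x..(θ * x), f t) / (θ * x - x)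
        = θ / (θ - 1) * A (θ * x) - 1 / (θ - 1) * A x := by
    filter_upwards [eventually_ge_atTop (1 : ℝ)] with x hx
    have hx0 : (0 : ℝ) < x := lt_of_lt_of_le one_pos hx
    have hθx : (1 : ℝ) ≤ θ * x := le_trans hx (le_mul_of_one_le_left hx0.le hθ.le)
    have hi1 := intInt_of_bdd f C hm hb hx
    have hi2 := intInt_of_bdd f C hm hb hθx
    have hsub : (∫ t in x..(θ * x), f t)
        = (∫ t in (1:ℝ)..(θ * x), f t) - (∫ t in (1:ℝ)..x, f t) :=
      (intervalIntegral.integral_interval_sub_left hi2 hi1).symm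
    rw [hsub, hA]
    have hθx0 : θ * x ≠ 0 := by positivity
    have hd : θ * x - x ≠ 0 := by nlinarith
    field_simp
  have hlim : Tendsto (fun x : ℝ => (∫ t in x..(θ * x), f t) / (θ * x - x))
      atTop (𝓝 α) := h2.congr' (Filter.EventuallyEq.symm heq)
  exact hlim.limsup_eq

/-- If `M(f) = α`, i.e. `lim_{x→∞} (1/x)∫₁ˣ f = α`, then `P̄(f)` exists and `P̄(f) ≥ α`. -/
theorem cesaro_limit_le_Pbar (f : ℝ → ℝ) (C α : ℝ)
    (hm : Measurable f) (hb : ∀ x ≥ (1 : ℝ), |f x| ≤ C)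
    (hM : Tendsto (fun x : ℝ => (∫ t in (1 : ℝ)..x, f t) / x) atTop (𝓝 α)) :
    ∃ L : ℝ, Tendsto (innerP f) (𝓝[>] (1 : ℝ)) (𝓝 L) ∧ α ≤ L := by
  refine ⟨α, ?_, le_refl α⟩
  have : ∀ᶠ θ in 𝓝[>] (1 : ℝ), innerP f θ = α := by
    filter_upwards [self_mem_nhdsWithin] with θ hθ
    exact innerP_eq f C α hm hb hM hθ
  exact Tendsto.congr' (by filter_upwards [this] with θ h using h.symm) tendsto_const_nhds
end

section
/- The functional P̄ on L^∞([1,∞)) defined by P̄(f) = lim_{θ→1⁺} limsup_{x→∞} (1/(θx−x))∫ₓ^{θx} f(t)dt is well-defined (the outer limit exists for every essentially bounded measurable f) and is sublinear: P̄(f+g) ≤ P̄(f) + P̄(g) and P̄(cf) = c·P̄(f) for c ≥ 0. -/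
open Filter MeasureTheory Set Topology

/-- the average function -/
noncomputable def avg (f : ℝ → ℝ) (θ x : ℝ) : ℝ := (∫ t in x..(θ * x), f t) / (θ * x - x)

lemma innerP_eq_s1 (f : ℝ → ℝ) (θ : ℝ) : innerP f θ = Filter.limsup (avg f θ) Filter.atTop := rfl

lemma intgr {f : ℝ → ℝ} {C : ℝ} (hm : Measurable f) (hb : ∀ x ≥ (1:ℝ), |f x| ≤ C)
    {a b : ℝ} (ha : 1 ≤ a) (hab : a ≤ b) : IntervalIntegrable f volume a b := by
  rw [intervalIntegrable_iff_integrableOn_Ioc_of_le hab]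
  apply Measure.integrableOn_of_bounded (M := C)
  · exact ((measure_mono Set.Ioc_subset_Icc_self).trans_lt measure_Icc_lt_top).ne
  · exact hm.aestronglyMeasurable
  · refine ae_restrict_of_forall_mem measurableSet_Ioc fun t ht => ?_
    exact hb t (ha.trans ht.1.le)

lemma C_nonneg {f : ℝ → ℝ} {C : ℝ} (hb : ∀ x ≥ (1:ℝ), |f x| ≤ C) : 0 ≤ C :=
  (abs_nonneg _).trans (hb 1 le_rfl)

lemma integral_bound {f : ℝ → ℝ} {C : ℝ} (hm : Measurable f) (hb : ∀ x ≥ (1:ℝ), |f x| ≤ C)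
    {a b : ℝ} (ha : 1 ≤ a) (hab : a ≤ b) : |∫ t in a..b, f t| ≤ C * (b - a) := by
  have := intervalIntegral.norm_integral_le_of_norm_le_const (C := C) (f := f) (a := a) (b := b) ?_
  · simpa [abs_of_nonneg (sub_nonneg.2 hab)] using this
  · intro x hx
    rw [Set.uIoc_of_le hab] at hx
    exact hb x (ha.trans hx.1.le)

lemma avg_abs_le {f : ℝ → ℝ} {C : ℝ} (hm : Measurable f) (hb : ∀ x ≥ (1:ℝ), |f x| ≤ C)
    {θ x : ℝ} (hθ : 1 < θ) (hx : 1 ≤ x) : |avg f θ x| ≤ C := by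
  have hx0 : 0 < x := lt_of_lt_of_le one_pos hx
  have hd : 0 < θ * x - x := by nlinarith
  have hxθ : x ≤ θ * x := by nlinarith
  have h1 := integral_bound hm hb hx hxθ
  rw [avg, abs_div, abs_of_pos hd, div_le_iff₀ hd]
  nlinarith [abs_nonneg (∫ t in x..(θ*x), f t)]

lemma avg_eventually_bound {f : ℝ → ℝ} {C : ℝ} (hm : Measurable f) (hb : ∀ x ≥ (1:ℝ), |f x| ≤ C)
    {θ : ℝ} (hθ : 1 < θ) : ∀ᶠ x in atTop, |avg f θ x| ≤ C :=
  eventually_atTop.2 ⟨1, fun x hx => avg_abs_le hm hb hθ hx⟩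

lemma avg_bddAbove {f : ℝ → ℝ} {C : ℝ} (hm : Measurable f) (hb : ∀ x ≥ (1:ℝ), |f x| ≤ C)
    {θ : ℝ} (hθ : 1 < θ) : IsBoundedUnder (· ≤ ·) atTop (avg f θ) :=
  ⟨C, (avg_eventually_bound hm hb hθ).mono fun x hx => (abs_le.1 hx).2⟩

lemma avg_bddBelow {f : ℝ → ℝ} {C : ℝ} (hm : Measurable f) (hb : ∀ x ≥ (1:ℝ), |f x| ≤ C)
    {θ : ℝ} (hθ : 1 < θ) : IsBoundedUnder (· ≥ ·) atTop (avg f θ) :=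
  ⟨-C, (avg_eventually_bound hm hb hθ).mono fun x hx => (abs_le.1 hx).1⟩

lemma innerP_abs_le {f : ℝ → ℝ} {C : ℝ} (hm : Measurable f) (hb : ∀ x ≥ (1:ℝ), |f x| ≤ C)
    {θ : ℝ} (hθ : 1 < θ) : |innerP f θ| ≤ C := by
  rw [abs_le, innerP_eq_s1]
  constructor
  · refine le_limsup_of_frequently_le ?_ (avg_bddAbove hm hb hθ)
    exact ((avg_eventually_bound hm hb hθ).mono fun x hx => (abs_le.1 hx).1).frequently
  · exact limsup_le_of_le (avg_bddBelow hm hb hθ).isCoboundedUnder_le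
      ((avg_eventually_bound hm hb hθ).mono fun x hx => (abs_le.1 hx).2)

lemma key {f : ℝ → ℝ} {C : ℝ} (hm : Measurable f) (hb : ∀ x ≥ (1:ℝ), |f x| ≤ C)
    {σ θ ε : ℝ} (hσ : 1 < σ) (hσθ : σ ≤ θ) (hε : 0 < ε) (hε1 : ε ≤ 1) :
    innerP f θ ≤ innerP f σ + ε + (2*C+1) * (θ * (σ-1) / (θ-1)) := by
  have hθ1 : 1 < θ := lt_of_lt_of_le hσ hσθ
  have hC := C_nonneg hb
  set A := innerP f σ with hA_def
  have hA : |A| ≤ C := innerP_abs_le hm hb hσ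
  have hlt : Filter.limsup (avg f σ) Filter.atTop < A + ε := by
    rw [← innerP_eq_s1]; linarith
  have hev : ∀ᶠ y in atTop, avg f σ y < A + ε :=
    eventually_lt_of_limsup_lt hlt (avg_bddAbove hm hb hσ)
  obtain ⟨X, hX⟩ := eventually_atTop.1 hev
  have hblock : ∀ y, max X 1 ≤ y → ∫ t in y..(σ*y), f t ≤ (A+ε)*((σ-1)*y) := by
    intro y hy
    have h1 : (1:ℝ) ≤ y := le_trans (le_max_right X 1) hy
    have hd : 0 < σ*y - y := by nlinarith
    have h2 := hX y (le_trans (le_max_left X 1) hy)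
    rw [avg, div_lt_iff₀ hd] at h2
    nlinarith
  set n : ℕ := ⌊Real.log θ / Real.log σ⌋₊ with hn
  have hlogσ : 0 < Real.log σ := Real.log_pos hσ
  have hσ0 : (0:ℝ) < σ := by linarith
  have hL0 : 0 ≤ Real.log θ / Real.log σ :=
    div_nonneg (Real.log_nonneg hθ1.le) hlogσ.le
  have hσn : σ^n ≤ θ := by
    have h1 : (n:ℝ) ≤ Real.log θ / Real.log σ := Nat.floor_le hL0
    rw [le_div_iff₀ hlogσ] at h1
    have h2 : Real.log (σ^n) ≤ Real.log θ := by rw [Real.log_pow]; exact h1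
    exact (Real.log_le_log_iff (pow_pos hσ0 n) (by linarith)).1 h2
  have hθσn : θ ≤ σ^(n+1) := by
    have h1 : Real.log θ / Real.log σ < (n:ℝ) + 1 := Nat.lt_floor_add_one _
    rw [div_lt_iff₀ hlogσ] at h1
    have h2 : Real.log θ < Real.log (σ^(n+1)) := by
      rw [Real.log_pow]; push_cast; linarith
    exact ((Real.log_lt_log_iff (by linarith) (pow_pos hσ0 _)).1 h2).le
  have hσn1 : (1:ℝ) ≤ σ^n := one_le_pow₀ hσ.le
  have hgap : θ - σ^n ≤ θ*(σ-1) := by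
    have h1 : σ^(n+1) = σ^n * σ := pow_succ σ n
    nlinarith
  have hev2 : ∀ᶠ x in atTop, avg f θ x ≤ A + ε + (2*C+1)*(θ*(σ-1)/(θ-1)) := by
    filter_upwards [eventually_ge_atTop (max X 1)] with x hx
    have h1x : (1:ℝ) ≤ x := le_trans (le_max_right X 1) hx
    have hx0 : (0:ℝ) < x := by linarith
    have hbase : ∀ k : ℕ, x ≤ σ^k * x := fun k =>
      le_mul_of_one_le_left hx0.le (one_le_pow₀ hσ.le)
    have hbase1 : ∀ k : ℕ, (1:ℝ) ≤ σ^k * x := fun k => le_trans h1x (hbase k)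
    have hint : ∀ k, k < n → IntervalIntegrable f volume (σ^k*x) (σ^(k+1)*x) := by
      intro k _
      refine intgr hm hb (hbase1 k) ?_
      have h5 : σ^(k+1)*x = σ*(σ^k*x) := by rw [pow_succ]; ring
      rw [h5]
      exact le_mul_of_one_le_left (by positivity) hσ.le
    have hsum : ∑ k ∈ Finset.range n, ∫ t in (σ^k*x)..(σ^(k+1)*x), f t
        = ∫ t in (σ^0*x)..(σ^n*x), f t :=
      intervalIntegral.sum_integral_adjacent_intervals (a := fun k => σ^k*x) hint
    rw [pow_zero, one_mul] at hsum
    have hxσn : x ≤ σ^n * x := hbase n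
    have hσnθx : σ^n * x ≤ θ * x := by nlinarith
    have hsplit : ∫ t in x..(θ*x), f t
        = (∫ t in x..(σ^n*x), f t) + ∫ t in (σ^n*x)..(θ*x), f t :=
      (intervalIntegral.integral_add_adjacent_intervals
        (intgr hm hb h1x hxσn) (intgr hm hb (hbase1 n) hσnθx)).symm
    have hsum_le : ∫ t in x..(σ^n*x), f t ≤ (A+ε)*((σ^n - 1)*x) := by
      rw [← hsum]
      have hterm : ∀ k ∈ Finset.range n,
          (∫ t in (σ^k*x)..(σ^(k+1)*x), f t) ≤ (A+ε)*((σ-1)*(σ^k*x)) := by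
        intro k _
        have h1 : max X 1 ≤ σ^k * x := le_trans hx (hbase k)
        have h2 := hblock (σ^k*x) h1
        have h3 : σ * (σ^k * x) = σ^(k+1) * x := by rw [pow_succ]; ring
        rw [h3] at h2
        exact h2
      refine le_trans (Finset.sum_le_sum hterm) (le_of_eq ?_)
      have hgeom : (∑ k ∈ Finset.range n, σ^k) * (σ - 1) = σ^n - 1 := geom_sum_mul σ n
      calc ∑ k ∈ Finset.range n, (A+ε)*((σ-1)*(σ^k*x))
          = ∑ k ∈ Finset.range n, σ^k * ((A+ε)*((σ-1)*x)) := by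
            refine Finset.sum_congr rfl fun k _ => by ring
        _ = (∑ k ∈ Finset.range n, σ^k) * ((A+ε)*((σ-1)*x)) := by
            rw [Finset.sum_mul]
        _ = (A+ε)*((σ^n - 1)*x) := by
            rw [← hgeom]; ring
    have hrem : |∫ t in (σ^n*x)..(θ*x), f t| ≤ C*((θ - σ^n)*x) := by
      have := integral_bound hm hb (hbase1 n) hσnθx
      have h4 : C * (θ*x - σ^n*x) = C*((θ - σ^n)*x) := by ring
      linarith [h4 ▸ this]
    have hd : 0 < θ*x - x := by nlinarith
    rw [avg, div_le_iff₀ hd]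
    have habs1 : -(C+1) ≤ A+ε := by cases abs_le.1 hA; linarith
    have habs2 : A+ε ≤ C+1 := by cases abs_le.1 hA; linarith
    have hθσn0 : 0 ≤ θ - σ^n := by linarith
    have e1 : 0 ≤ (C+1+(A+ε)) * ((θ - σ^n)*x) :=
      mul_nonneg (by linarith) (mul_nonneg hθσn0 hx0.le)
    have e2 : (θ-σ^n)*x ≤ θ*(σ-1)*x := mul_le_mul_of_nonneg_right hgap hx0.le
    have e4 : (C+1)*((θ-σ^n)*x) ≤ (C+1)*(θ*(σ-1)*x) :=
      mul_le_mul_of_nonneg_left e2 (by linarith)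
    have hrem' : ∫ t in (σ^n*x)..(θ*x), f t ≤ C*(θ*(σ-1)*x) := by
      have h6 := (abs_le.1 hrem).2
      have h7 := mul_le_mul_of_nonneg_left e2 hC
      linarith
    have hmain : (A+ε)*((σ^n-1)*x) ≤ (A+ε)*((θ-1)*x) + (C+1)*(θ*(σ-1)*x) := by
      have hid : (A+ε)*((σ^n-1)*x) = (A+ε)*((θ-1)*x) - (A+ε)*((θ-σ^n)*x) := by ring
      have e1' : 0 ≤ (C+1)*((θ-σ^n)*x) + (A+ε)*((θ-σ^n)*x) := by
        have := e1; linarith [add_mul (C+1) (A+ε) ((θ-σ^n)*x)]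
      linarith
    have hrw : (A + ε + (2*C+1)*(θ*(σ-1)/(θ-1)))*(θ*x - x)
        = (A+ε)*((θ-1)*x) + (2*C+1)*(θ*(σ-1)*x) := by
      have hθne : (θ:ℝ) - 1 ≠ 0 := ne_of_gt (by linarith)
      field_simp
    rw [hsplit, hrw]
    have hsplit2 : (2*C+1)*(θ*(σ-1)*x) = (C+1)*(θ*(σ-1)*x) + C*(θ*(σ-1)*x) := by ring
    linarith
  rw [innerP_eq_s1]
  exact limsup_le_of_le (avg_bddBelow hm hb hθ1).isCoboundedUnder_le hev2

lemma exists_limit {f : ℝ → ℝ} {C : ℝ} (hm : Measurable f) (hb : ∀ x ≥ (1:ℝ), |f x| ≤ C) :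
    ∃ L : ℝ, Tendsto (innerP f) (𝓝[>] (1 : ℝ)) (𝓝 L) := by
  have hC := C_nonneg hb
  have hbound : ∀ᶠ θ in 𝓝[>](1:ℝ), |innerP f θ| ≤ C :=
    eventually_mem_nhdsWithin.mono fun θ hθ => innerP_abs_le hm hb hθ
  have hba : IsBoundedUnder (· ≤ ·) (𝓝[>](1:ℝ)) (innerP f) :=
    ⟨C, hbound.mono fun θ h => (abs_le.1 h).2⟩
  have hbb : IsBoundedUnder (· ≥ ·) (𝓝[>](1:ℝ)) (innerP f) :=
    ⟨-C, hbound.mono fun θ h => (abs_le.1 h).1⟩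
  set I := liminf (innerP f) (𝓝[>](1:ℝ)) with hI_def
  have hkey : ∀ θ : ℝ, 1 < θ → innerP f θ ≤ I := by
    intro θ hθ
    have h2δ : ∀ δ : ℝ, 0 < δ → innerP f θ ≤ I + 2*δ := by
      intro δ hδ
      set ε := min δ 1 with hε_def
      have hε : 0 < ε := lt_min hδ one_pos
      have hε1 : ε ≤ 1 := min_le_right _ _
      have hεδ : ε ≤ δ := min_le_left _ _
      have htend : Tendsto (fun σ : ℝ => (2*C+1)*(θ*(σ-1)/(θ-1))) (𝓝[>](1:ℝ)) (𝓝 0) := by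
        have hc : Continuous (fun σ : ℝ => (2*C+1)*(θ*(σ-1)/(θ-1))) := by
          apply continuous_const.mul
          exact (continuous_const.mul (continuous_id.sub continuous_const)).div_const _
        have h8 := (hc.tendsto 1).mono_left (nhdsWithin_le_nhds (s := Set.Ioi (1:ℝ)))
        simpa using h8
      have hsmall : ∀ᶠ σ in 𝓝[>](1:ℝ), (2*C+1)*(θ*(σ-1)/(θ-1)) < δ :=
        htend.eventually_lt_const hδ
      have hmem : ∀ᶠ σ in 𝓝[>](1:ℝ), σ ∈ Ioo (1:ℝ) θ :=
        eventually_of_mem (Ioo_mem_nhdsGT_of_mem ⟨le_rfl, hθ⟩) fun _ h => h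
      have hev : ∀ᶠ σ in 𝓝[>](1:ℝ), innerP f θ - 2*δ ≤ innerP f σ := by
        filter_upwards [hsmall, hmem] with σ h1 h2
        have := key hm hb h2.1 h2.2.le hε hε1
        linarith
      have := le_liminf_of_le hba.isCoboundedUnder_ge hev
      linarith
    refine le_of_forall_pos_le_add fun δ hδ => ?_
    have := h2δ (δ/2) (by linarith)
    linarith
  have hS : limsup (innerP f) (𝓝[>](1:ℝ)) ≤ I :=
    limsup_le_of_le hbb.isCoboundedUnder_le
      (eventually_mem_nhdsWithin.mono fun θ hθ => hkey θ hθ)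
  have hI : I ≤ limsup (innerP f) (𝓝[>](1:ℝ)) := liminf_le_limsup hba hbb
  exact ⟨I, tendsto_of_liminf_eq_limsup rfl (le_antisymm hS hI) hba hbb⟩

lemma innerP_add_le {f g : ℝ → ℝ} {Cf Cg : ℝ} (hmf : Measurable f) (hmg : Measurable g)
    (hbf : ∀ x ≥ (1:ℝ), |f x| ≤ Cf) (hbg : ∀ x ≥ (1:ℝ), |g x| ≤ Cg)
    {θ : ℝ} (hθ : 1 < θ) :
    innerP (fun x => f x + g x) θ ≤ innerP f θ + innerP g θ := by
  have hevEq : ∀ᶠ x in atTop, avg (fun x => f x + g x) θ x = avg f θ x + avg g θ x := by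
    filter_upwards [eventually_ge_atTop (1:ℝ)] with x hx
    have hxθ : x ≤ θ * x := by nlinarith
    rw [avg, avg, avg, intervalIntegral.integral_add (intgr hmf hbf hx hxθ)
      (intgr hmg hbg hx hxθ), add_div]
  rw [innerP_eq_s1, limsup_congr hevEq]
  have h := limsup_add_le (f := atTop) (u := avg f θ) (v := avg g θ)
    (avg_bddBelow hmf hbf hθ) (avg_bddAbove hmf hbf hθ)
    (avg_bddBelow hmg hbg hθ).isCoboundedUnder_le (avg_bddAbove hmg hbg hθ)
  rw [innerP_eq_s1, innerP_eq_s1]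
  exact h

lemma innerP_smul {f : ℝ → ℝ} {C c : ℝ} (hm : Measurable f) (hb : ∀ x ≥ (1:ℝ), |f x| ≤ C)
    (hc : 0 < c) {θ : ℝ} (hθ : 1 < θ) :
    innerP (fun x => c * f x) θ = c * innerP f θ := by
  have hEq : avg (fun x => c * f x) θ = fun x => c * avg f θ x := by
    funext x
    rw [avg, avg, intervalIntegral.integral_const_mul, mul_div_assoc]
  have hgu : IsBoundedUnder (· ≤ ·) atTop (fun x => c * avg f θ x) :=
    ⟨c * C, eventually_map.2 ((avg_eventually_bound hm hb hθ).mono fun x hx =>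
      mul_le_mul_of_nonneg_left (abs_le.1 hx).2 hc.le)⟩
  have hgu_co : IsCoboundedUnder (· ≤ ·) atTop (fun x => c * avg f θ x) :=
    IsBoundedUnder.isCoboundedUnder_le (⟨c * (-C), eventually_map.2
      ((avg_eventually_bound hm hb hθ).mono fun x hx =>
        mul_le_mul_of_nonneg_left (abs_le.1 hx).1 hc.le)⟩ :
      IsBoundedUnder (· ≥ ·) atTop (fun x => c * avg f θ x))
  have h := (OrderIso.mulLeft₀ c hc).limsup_apply (f := atTop) (u := avg f θ)
    (avg_bddAbove hm hb hθ) (avg_bddBelow hm hb hθ).isCoboundedUnder_le hgu hgu_co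
  simp only [OrderIso.mulLeft₀_apply] at h
  rw [innerP_eq_s1, innerP_eq_s1, hEq, ← h]

/-- `P̄(f) = lim_{θ→1⁺} limsup_{x→∞} (1/(θx−x))∫ₓ^{θx} f` is well defined on
essentially bounded measurable functions on `[1,∞)` and is sublinear. -/
theorem Pbar_wellDefined_and_sublinear :
    (∀ (f : ℝ → ℝ) (C : ℝ), Measurable f → (∀ x ≥ (1 : ℝ), |f x| ≤ C) →
      ∃ L : ℝ, Tendsto (innerP f) (𝓝[>] (1 : ℝ)) (𝓝 L)) ∧
    (∀ (f g : ℝ → ℝ) (Cf Cg Lf Lg Lfg : ℝ), Measurable f → Measurable g →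
      (∀ x ≥ (1 : ℝ), |f x| ≤ Cf) → (∀ x ≥ (1 : ℝ), |g x| ≤ Cg) →
      Tendsto (innerP f) (𝓝[>] (1 : ℝ)) (𝓝 Lf) →
      Tendsto (innerP g) (𝓝[>] (1 : ℝ)) (𝓝 Lg) →
      Tendsto (innerP (fun x => f x + g x)) (𝓝[>] (1 : ℝ)) (𝓝 Lfg) →
      Lfg ≤ Lf + Lg) ∧
    (∀ (f : ℝ → ℝ) (C c Lf Lcf : ℝ), Measurable f → (∀ x ≥ (1 : ℝ), |f x| ≤ C) →
      0 ≤ c →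
      Tendsto (innerP f) (𝓝[>] (1 : ℝ)) (𝓝 Lf) →
      Tendsto (innerP (fun x => c * f x)) (𝓝[>] (1 : ℝ)) (𝓝 Lcf) →
      Lcf = c * Lf) := by
  refine ⟨fun f C hm hb => exists_limit hm hb, ?_, ?_⟩
  · intro f g Cf Cg Lf Lg Lfg hmf hmg hbf hbg hf hg hfg
    refine le_of_tendsto_of_tendsto hfg (hf.add hg) ?_
    exact eventually_mem_nhdsWithin.mono fun θ hθ => innerP_add_le hmf hmg hbf hbg hθ
  · intro f C c Lf Lcf hm hb hc hf hcf
    rcases hc.eq_or_lt with rfl | hc'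
    · have hzero : innerP (fun x => (0:ℝ) * f x) = fun _ : ℝ => (0:ℝ) := by
        funext θ
        have h1 : (fun x : ℝ => (0:ℝ) * f x) = fun _ => (0:ℝ) := funext fun x => zero_mul _
        rw [innerP_eq_s1, h1]
        have h2 : avg (fun _ => (0:ℝ)) θ = fun _ => (0:ℝ) := by
          funext x; rw [avg]; simp
        rw [h2]
        exact limsup_const (0:ℝ)
      rw [hzero] at hcf
      have := tendsto_nhds_unique hcf tendsto_const_nhds
      rw [this, zero_mul]
    · have hevEq : ∀ᶠ θ in 𝓝[>](1:ℝ), innerP (fun x => c * f x) θ = c * innerP f θ :=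
        eventually_mem_nhdsWithin.mono fun θ hθ => innerP_smul hm hb hc' hθ
      have h2 : Tendsto (fun θ => c * innerP f θ) (𝓝[>](1:ℝ)) (𝓝 Lcf) :=
        (tendsto_congr' hevEq).1 hcf
      exact tendsto_nhds_unique h2 (hf.const_mul c)
end

section
/- For every f ∈ L^∞([1,∞)), P̄(f) = K̄(Wf), where (Wf)(x) = f(eˣ). That is, lim_{θ→1⁺} limsup_{x→∞} (1/(θx−x))∫ₓ^{θx} f(t)dt equals lim_{θ→0⁺} limsup_{x→∞} (1/θ)∫ₓ^{x+θ} f(eᵗ)dt. -/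
open Filter MeasureTheory Set Topology

/-- The inner limsup defining `K̄`. -/
noncomputable def innerK (f : ℝ → ℝ) (θ : ℝ) : ℝ :=
  Filter.limsup (fun x : ℝ => (∫ t in x..(x + θ), f t) / θ) Filter.atTop

/-!
The map `θ ↦ limsup_{x → ∞} ∫_x^{x+θ} g` is subadditive and bounded by `Cθ`, so by a
continuous-parameter Fekete lemma `innerK g θ`, which is this map divided by `θ`, converges as
`θ → 0⁺`. Substituting `t = eˢ` turns the average of `f` over `[x, θx]` into an average of
`g = f ∘ exp` over `[log x, log x + log θ]` against a weight differing from the uniform one by at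
most `1`, so `|innerP f θ - innerK g (log θ)| ≤ C log θ`, which tends to `0` as `θ → 1⁺`.
-/

open Real

section Fekete

variable {h : ℝ → ℝ}

lemma le_natCast_mul_add_of_subadditive (hsub : ∀ a b, 0 ≤ a → 0 ≤ b → h (a + b) ≤ h a + h b)
    {θ r : ℝ} (hθ : 0 ≤ θ) (hr : 0 ≤ r) (n : ℕ) : h (n * θ + r) ≤ n * h θ + h r := by
  induction n with
  | zero => simp
  | succ n ih =>
    calc h ((n + 1 : ℕ) * θ + r) = h (θ + (n * θ + r)) := by push_cast; ring_nf
      _ ≤ h θ + h (n * θ + r) := hsub _ _ hθ (by positivity)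
      _ ≤ (n + 1 : ℕ) * h θ + h r := by push_cast; linarith

lemma tendsto_natFloor_div_mul_nhdsGT_zero {a : ℝ} (ha : 0 ≤ a) :
    Tendsto (fun θ : ℝ => ⌊a / θ⌋₊ * θ) (𝓝[>] 0) (𝓝 a) := by
  refine ((tendsto_nat_floor_mul_div_atTop ha).comp tendsto_inv_nhdsGT_zero).congr fun θ => ?_
  simp [div_eq_mul_inv]

theorem tendsto_div_nhdsGT_zero_of_subadditive {C : ℝ}
    (hsub : ∀ a b, 0 ≤ a → 0 ≤ b → h (a + b) ≤ h a + h b) (hle : ∀ θ, 0 ≤ θ → h θ ≤ C * θ) :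
    Tendsto (fun θ => h θ / θ) (𝓝[>] 0) (𝓝 (⨆ θ : Ioi (0 : ℝ), h θ / θ)) := by
  have hbdd : BddAbove (range fun θ : Ioi (0 : ℝ) => h θ / θ) := by
    refine ⟨C, ?_⟩
    rintro _ ⟨θ, rfl⟩
    exact (div_le_iff₀ θ.2).2 (hle θ θ.2.le)
  refine tendsto_order.2 ⟨fun a ha => ?_, fun a ha => ?_⟩
  · obtain ⟨⟨θ₀, hθ₀⟩, ha⟩ := exists_lt_of_lt_ciSup ha
    have hθ₀ : 0 < θ₀ := hθ₀
    -- Write `θ₀ = ⌊θ₀/θ⌋₊ θ + r` with `0 ≤ r < θ` and apply subadditivity.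
    set m : ℝ → ℝ := fun θ => ⌊θ₀ / θ⌋₊ * θ
    have hm : Tendsto m (𝓝[>] 0) (𝓝 θ₀) := tendsto_natFloor_div_mul_nhdsGT_zero hθ₀.le
    have hlower : Tendsto (fun θ => (h θ₀ - C * (θ₀ - m θ)) / m θ) (𝓝[>] 0) (𝓝 (h θ₀ / θ₀)) := by
      have := ((tendsto_const_nhds (x := h θ₀)).sub ((tendsto_const_nhds (x := C)).mul
        ((tendsto_const_nhds (x := θ₀)).sub hm))).div hm hθ₀.ne'
      rwa [sub_self, mul_zero, sub_zero] at this
    filter_upwards [hlower.eventually (lt_mem_nhds ha), hm.eventually (lt_mem_nhds hθ₀),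
      self_mem_nhdsWithin] with θ hlt hpos (hθ : 0 < θ)
    refine hlt.trans_le ?_
    have hmθ : m θ ≤ θ₀ := (le_div_iff₀ hθ).1 (Nat.floor_le (by positivity))
    have hkey : h θ₀ ≤ ⌊θ₀ / θ⌋₊ * h θ + C * (θ₀ - m θ) := by
      have := le_natCast_mul_add_of_subadditive hsub hθ.le (sub_nonneg.2 hmθ) ⌊θ₀ / θ⌋₊
      rw [add_sub_cancel] at this
      linarith [hle _ (sub_nonneg.2 hmθ)]
    rw [div_le_div_iff₀ hpos hθ]
    linarith [mul_le_mul_of_nonneg_right hkey hθ.le]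
  · filter_upwards [self_mem_nhdsWithin] with θ hθ
    exact (le_ciSup hbdd ⟨θ, hθ⟩).trans_lt ha

end Fekete

section EventuallyAbsLE

variable {ι : Type*} {l : Filter ι} {u v : ι → ℝ} {K c : ℝ}

lemma isBoundedUnder_le_of_eventually_abs_le (h : ∀ᶠ i in l, |u i| ≤ K) :
    l.IsBoundedUnder (· ≤ ·) u :=
  isBoundedUnder_of_eventually_le (h.mono fun _ hi => (abs_le.1 hi).2)

lemma isBoundedUnder_ge_of_eventually_abs_le (h : ∀ᶠ i in l, |u i| ≤ K) :
    l.IsBoundedUnder (· ≥ ·) u :=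
  isBoundedUnder_of_eventually_ge (h.mono fun _ hi => (abs_le.1 hi).1)

lemma isCoboundedUnder_le_of_eventually_abs_le [l.NeBot] (h : ∀ᶠ i in l, |u i| ≤ K) :
    l.IsCoboundedUnder (· ≤ ·) u :=
  (isBoundedUnder_ge_of_eventually_abs_le h).isCoboundedUnder_le

lemma limsup_le_limsup_add_of_eventually_le [l.NeBot] {K' : ℝ} (hu : ∀ᶠ i in l, |u i| ≤ K)
    (hv : ∀ᶠ i in l, |v i| ≤ K') (huv : ∀ᶠ i in l, u i ≤ v i + c) :
    limsup u l ≤ limsup v l + c := by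
  rw [← limsup_add_const l v c (isBoundedUnder_le_of_eventually_abs_le hv)
    (isCoboundedUnder_le_of_eventually_abs_le hv)]
  refine limsup_le_limsup huv (isCoboundedUnder_le_of_eventually_abs_le hu) ?_
  exact isBoundedUnder_of_eventually_le (a := K' + c)
    (hv.mono fun _ hi => by linarith [(abs_le.1 hi).2])

lemma abs_limsup_sub_limsup_le [l.NeBot] (hv : ∀ᶠ i in l, |v i| ≤ K)
    (huv : ∀ᶠ i in l, |u i - v i| ≤ c) : |limsup u l - limsup v l| ≤ c := by
  have hu : ∀ᶠ i in l, |u i| ≤ K + c := by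
    filter_upwards [hv, huv] with i hvi huvi
    linarith [abs_sub_abs_le_abs_sub (u i) (v i)]
  rw [abs_sub_le_iff]
  constructor
  · have := limsup_le_limsup_add_of_eventually_le hu hv
      (huv.mono fun _ hi => by linarith [(abs_le.1 hi).2])
    linarith
  · have := limsup_le_limsup_add_of_eventually_le hv hu
      (huv.mono fun _ hi => by linarith [(abs_le.1 hi).1])
    linarith

end EventuallyAbsLE

lemma intervalIntegrable_of_forall_ge_abs_le {g : ℝ → ℝ} {C x₀ a b : ℝ} (hgm : Measurable g)
    (hg : ∀ x ≥ x₀, |g x| ≤ C) (ha : x₀ ≤ a) (hb : x₀ ≤ b) : IntervalIntegrable g volume a b := by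
  refine (intervalIntegrable_const (c := C)).mono_fun' hgm.aestronglyMeasurable ?_
  refine (ae_restrict_iff' measurableSet_uIoc).2 (ae_of_all _ fun t ht => ?_)
  exact hg t ((le_min ha hb).trans ht.1.le)

noncomputable def windowLimsup (g : ℝ → ℝ) (θ : ℝ) : ℝ :=
  limsup (fun x => ∫ t in x..x + θ, g t) atTop

section Window

variable {g : ℝ → ℝ} {C θ : ℝ}

lemma eventually_abs_integral_le (hg : ∀ᶠ x in atTop, |g x| ≤ C) (hθ : 0 ≤ θ) :
    ∀ᶠ x in atTop, |∫ t in x..x + θ, g t| ≤ C * θ := by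
  obtain ⟨x₀, hx₀⟩ := eventually_atTop.1 hg
  filter_upwards [eventually_ge_atTop x₀] with x hx
  have := intervalIntegral.norm_integral_le_of_norm_le_const (a := x) (b := x + θ) (f := g)
    (C := C) fun t ht => (norm_eq_abs _).trans_le (hx₀ t ((le_min hx (by linarith)).trans ht.1.le))
  simpa [abs_of_nonneg hθ] using this

lemma windowLimsup_le (hg : ∀ᶠ x in atTop, |g x| ≤ C) (hθ : 0 ≤ θ) :
    windowLimsup g θ ≤ C * θ := by
  have hbd := eventually_abs_integral_le hg hθ
  exact limsup_le_of_le (isCoboundedUnder_le_of_eventually_abs_le hbd)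
    (hbd.mono fun _ hx => (abs_le.1 hx).2)

lemma limsup_comp_add_const (u : ℝ → ℝ) (a : ℝ) :
    limsup (fun x => u (x + a)) atTop = limsup u atTop := by
  conv_rhs => rw [← map_add_atTop_eq a]
  rfl

lemma windowLimsup_add_le (hgm : Measurable g) (hg : ∀ᶠ x in atTop, |g x| ≤ C) {a b : ℝ}
    (ha : 0 ≤ a) (hb : 0 ≤ b) : windowLimsup g (a + b) ≤ windowLimsup g a + windowLimsup g b := by
  obtain ⟨x₀, hx₀⟩ := eventually_atTop.1 hg
  have hsplit : ∀ᶠ x in atTop, ∫ t in x..x + (a + b), g t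
      = (∫ t in x..x + a, g t) + ∫ t in x + a..x + a + b, g t := by
    filter_upwards [eventually_ge_atTop x₀] with x hx
    rw [← add_assoc, intervalIntegral.integral_add_adjacent_intervals] <;>
      exact intervalIntegrable_of_forall_ge_abs_le hgm hx₀ (by linarith) (by linarith)
  have hA := eventually_abs_integral_le hg ha
  have hB : ∀ᶠ x in atTop, |∫ t in x + a..x + a + b, g t| ≤ C * b :=
    (tendsto_atTop_add_const_right _ a tendsto_id).eventually (eventually_abs_integral_le hg hb)
  calc windowLimsup g (a + b)
      = limsup ((fun x => ∫ t in x..x + a, g t) + fun x => ∫ t in x + a..x + a + b, g t) atTop :=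
        limsup_congr hsplit
    _ ≤ windowLimsup g a + limsup (fun x => ∫ t in x + a..x + a + b, g t) atTop :=
        limsup_add_le (isBoundedUnder_ge_of_eventually_abs_le hA)
          (isBoundedUnder_le_of_eventually_abs_le hA)
          (isCoboundedUnder_le_of_eventually_abs_le hB) (isBoundedUnder_le_of_eventually_abs_le hB)
    _ = windowLimsup g a + windowLimsup g b := by
        rw [limsup_comp_add_const (fun y => ∫ t in y..y + b, g t) a]
        rfl

lemma innerK_eq_windowLimsup_div (hg : ∀ᶠ x in atTop, |g x| ≤ C) (hθ : 0 < θ) :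
    innerK g θ = windowLimsup g θ / θ := by
  have hbd := eventually_abs_integral_le hg hθ.le
  exact ((monotone_div_right_of_nonneg hθ.le).map_limsup_of_continuousAt _
    (continuous_id.div_const θ).continuousAt (isBoundedUnder_le_of_eventually_abs_le hbd)
    (isCoboundedUnder_le_of_eventually_abs_le hbd)).symm

theorem tendsto_innerK_nhdsGT_zero (hgm : Measurable g) (hg : ∀ᶠ x in atTop, |g x| ≤ C) :
    Tendsto (innerK g) (𝓝[>] 0) (𝓝 (⨆ θ : Ioi (0 : ℝ), windowLimsup g θ / θ)) := by
  refine (tendsto_div_nhdsGT_zero_of_subadditive (fun a b ha hb => windowLimsup_add_le hgm hg ha hb)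
    fun θ hθ => windowLimsup_le hg hθ).congr' ?_
  filter_upwards [self_mem_nhdsWithin] with θ hθ
  exact (innerK_eq_windowLimsup_div hg hθ).symm

end Window

lemma abs_exp_sub_div_sub_inv_log_le {θ y s : ℝ} (hθ : 1 < θ) (hys : y ≤ s)
    (hsy : s ≤ y + log θ) : |exp (s - y) / (θ - 1) - (log θ)⁻¹| ≤ 1 := by
  have hd : 0 < θ - 1 := sub_pos.2 hθ
  have hθ0 : 0 < θ := by linarith
  have hlog : 0 < log θ := log_pos hθ
  -- Both numbers lie in `[1/(θ-1), θ/(θ-1)]`, an interval of length `1`.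
  have hexp_ge : 1 / (θ - 1) ≤ exp (s - y) / (θ - 1) := by
    gcongr
    exact one_le_exp (by linarith)
  have hexp_le : exp (s - y) / (θ - 1) ≤ θ / (θ - 1) := by
    gcongr
    rw [← exp_log hθ0]
    exact exp_le_exp.2 (by linarith)
  have hinv_ge : 1 / (θ - 1) ≤ (log θ)⁻¹ := by
    rw [one_div]
    exact inv_anti₀ hlog (log_le_sub_one_of_pos hθ0)
  have hinv_le : (log θ)⁻¹ ≤ θ / (θ - 1) := by
    rw [← inv_div]
    refine inv_anti₀ (by positivity) ?_
    calc (θ - 1) / θ = 1 - θ⁻¹ := by field_simp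
      _ ≤ log θ := one_sub_inv_le_log_of_pos hθ0
  have hlen : θ / (θ - 1) = 1 / (θ - 1) + 1 := by
    field_simp
    ring
  rw [abs_le]
  constructor <;> linarith

lemma abs_average_sub_average_comp_exp_le {f : ℝ → ℝ} {C θ y : ℝ} (hm : Measurable f)
    (hθ : 1 < θ) (hb : ∀ s ≥ y, |f (exp s)| ≤ C) :
    |(∫ t in exp y..θ * exp y, f t) / (θ * exp y - exp y)
      - (∫ s in y..y + log θ, f (exp s)) / log θ| ≤ C * log θ := by
  have hlog : 0 < log θ := log_pos hθ
  have hsubst : ∫ t in exp y..θ * exp y, f t = ∫ s in y..y + log θ, f (exp s) * exp s := by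
    rw [show θ * exp y = exp (y + log θ) by rw [exp_add, exp_log (by linarith)]; ring]
    exact (intervalIntegral.integral_comp_mul_deriv_of_deriv_nonneg continuous_exp.continuousOn
      (fun s _ => hasDerivAt_exp s) fun s _ => (exp_pos s).le).symm
  have hint : IntervalIntegrable (fun s => f (exp s)) volume y (y + log θ) :=
    intervalIntegrable_of_forall_ge_abs_le (hm.comp measurable_exp) hb le_rfl (by linarith)
  have hdiff : (∫ s in y..y + log θ, f (exp s) * exp s) / (θ * exp y - exp y)
      - (∫ s in y..y + log θ, f (exp s)) / log θ
      = ∫ s in y..y + log θ, (exp (s - y) / (θ - 1) - (log θ)⁻¹) * f (exp s) := by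
    have hint' := hint.mul_continuousOn continuous_exp.continuousOn
    rw [← intervalIntegral.integral_div, ← intervalIntegral.integral_div,
      ← intervalIntegral.integral_sub (hint'.div_const _) (hint.div_const _)]
    refine intervalIntegral.integral_congr fun s _ => ?_
    rw [exp_sub]
    field_simp
  rw [hsubst, hdiff]
  have := intervalIntegral.norm_integral_le_of_norm_le_const
    (f := fun s => (exp (s - y) / (θ - 1) - (log θ)⁻¹) * f (exp s)) (C := C)
    (a := y) (b := y + log θ) fun s hs => by
      rw [uIoc_of_le (by linarith)] at hs
      rw [norm_mul, norm_eq_abs, norm_eq_abs]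
      simpa using mul_le_mul (abs_exp_sub_div_sub_inv_log_le hθ hs.1.le hs.2) (hb s hs.1.le)
        (abs_nonneg _) zero_le_one
  simpa [abs_of_pos hlog] using this

lemma abs_innerP_sub_innerK_log_le {f : ℝ → ℝ} {C θ : ℝ} (hm : Measurable f)
    (hb : ∀ᶠ x in atTop, |f x| ≤ C) (hθ : 1 < θ) :
    |innerP f θ - innerK (fun y => f (exp y)) (log θ)| ≤ C * log θ := by
  have hlog : 0 < log θ := log_pos hθ
  have hg : ∀ᶠ y in atTop, |f (exp y)| ≤ C := tendsto_exp_atTop.eventually hb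
  obtain ⟨y₀, hy₀⟩ := eventually_atTop.1 hg
  have hP : innerP f θ
      = limsup ((fun x => (∫ t in x..θ * x, f t) / (θ * x - x)) ∘ exp) atTop := by
    rw [limsup_comp, map_exp_atTop, innerP]
  rw [hP, innerK]
  refine abs_limsup_sub_limsup_le (K := C) ?_ ?_
  · filter_upwards [eventually_abs_integral_le hg hlog.le] with y hy
    rwa [abs_div, abs_of_pos hlog, div_le_iff₀ hlog]
  · filter_upwards [eventually_ge_atTop y₀] with y hy
    exact abs_average_sub_average_comp_exp_le hm hθ fun s hs => hy₀ s (hy.trans hs)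

lemma tendsto_log_nhdsGT_one : Tendsto log (𝓝[>] 1) (𝓝[>] 0) := by
  refine tendsto_nhdsWithin_of_tendsto_nhds_of_eventually_within _ ?_ ?_
  · simpa using (continuousAt_log one_ne_zero).tendsto.mono_left nhdsWithin_le_nhds
  · filter_upwards [self_mem_nhdsWithin] with θ hθ using log_pos hθ

/-- For every `f ∈ L^∞([1,∞))`, `P̄(f) = K̄(Wf)` where `(Wf)(x) = f(eˣ)`. -/
theorem Pbar_eq_Kbar_comp_exp (f : ℝ → ℝ) (C : ℝ)
    (hm : Measurable f) (hb : ∀ x ≥ (1 : ℝ), |f x| ≤ C) :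
    ∃ L : ℝ, Tendsto (innerP f) (𝓝[>] (1 : ℝ)) (𝓝 L) ∧
      Tendsto (innerK (fun x => f (Real.exp x))) (𝓝[>] (0 : ℝ)) (𝓝 L) := by
  have hf : ∀ᶠ x in atTop, |f x| ≤ C := eventually_atTop.2 ⟨1, hb⟩
  have hK := tendsto_innerK_nhdsGT_zero (g := fun x => f (exp x)) (hm.comp measurable_exp)
    (tendsto_exp_atTop.eventually hf)
  refine ⟨_, ?_, hK⟩
  have hdiff : Tendsto (fun θ => innerP f θ - innerK (fun y => f (exp y)) (log θ))
      (𝓝[>] 1) (𝓝 0) := by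
    refine squeeze_zero_norm' ?_
      (by simpa using (tendsto_log_nhdsGT_one.mono_right nhdsWithin_le_nhds).const_mul C)
    filter_upwards [self_mem_nhdsWithin] with θ hθ
    exact abs_innerP_sub_innerK_log_le hm hf hθ
  simpa using (hK.comp tendsto_log_nhdsGT_one).add hdiff
end

section
/- For every f ∈ L^∞([1,∞)), the two sublinear functionals P̄ and Q̄ coincide: lim_{θ→1⁺} limsup_{x→∞} (1/(θx−x))∫ₓ^{θx} f(t)dt = lim_{θ→1⁺} limsup_{x→∞} (1/log θ)∫ₓ^{θx} f(t)·(dt/t). -/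
/-!
Put `g(s) = limsup_{x→∞} ∫_x^{e^s x} f(t)/t dt`. Splitting `[x, e^{s+t}x]` at `e^s x` and using
that `x ↦ e^s x` preserves `atTop` shows that `g` is subadditive on `[0, ∞)`, and `|g(s)| ≤ C s`.
For such a function `g(s)/s` converges, as `s → 0⁺`, to its supremum: writing `a = n s + r` with
`0 ≤ r < s` gives `g(a)/a ≤ g(s)/s + 2Cs/a`. Since `Q̄`'s inner limsup at `θ` is `g(log θ)/log θ`,
this gives the limit of `Q̄`. On `[x, θx]` the weights `1/((θ-1)x)` and `1/(t log θ)` differ by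
`o(1/((θ-1)x))` uniformly in `x` as `θ → 1⁺`, so the two inner limsups differ by `o(1)·C`.
-/

open Filter MeasureTheory Set Topology

/-- The inner limsup defining `Q̄`. -/
noncomputable def innerQ (f : ℝ → ℝ) (θ : ℝ) : ℝ :=
  Filter.limsup (fun x : ℝ => (∫ t in x..(θ * x), f t / t) / Real.log θ) Filter.atTop

section Subadditive

variable {g : ℝ → ℝ} {C : ℝ}

lemma le_nat_mul_add_of_subadditive (hsub : ∀ s ≥ 0, ∀ t ≥ 0, g (s + t) ≤ g s + g t)
    {s r : ℝ} (hs : 0 ≤ s) (hr : 0 ≤ r) (n : ℕ) : g (n * s + r) ≤ n * g s + g r := by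
  induction n with
  | zero => simp
  | succ n ih =>
    have hstep := hsub s hs (n * s + r) (by positivity)
    push_cast
    calc g ((n + 1) * s + r) = g (s + (n * s + r)) := by ring_nf
      _ ≤ (n + 1) * g s + g r := by linarith

lemma div_le_div_add_of_subadditive (hsub : ∀ s ≥ 0, ∀ t ≥ 0, g (s + t) ≤ g s + g t)
    (hbd : ∀ s ≥ 0, |g s| ≤ C * s) {s a : ℝ} (hs : 0 < s) (hsa : s ≤ a) :
    g a / a ≤ g s / s + 2 * C * s / a := by
  have ha : 0 < a := hs.trans_le hsa
  set n := ⌊a / s⌋₊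
  have hn : (n : ℝ) * s ≤ a := (le_div_iff₀ hs).1 (Nat.floor_le (by positivity))
  have hn' : a < (n + 1) * s := (div_lt_iff₀ hs).1 (Nat.lt_floor_add_one _)
  have hgs := abs_le.1 (hbd s hs.le)
  have hrem := (abs_le.1 (hbd (a - n * s) (by linarith))).2
  have hsplit : g a ≤ n * g s + g (a - n * s) := by
    simpa using le_nat_mul_add_of_subadditive hsub hs.le (sub_nonneg.2 hn) n
  -- `a / s - n ∈ [0, 1)` and `|g s| ≤ C s`, so rounding `a / s` down costs at most `C s`
  have hround : (n : ℝ) * g s ≤ a / s * g s + C * s := by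
    have h0 : 0 ≤ a / s - n := by rw [sub_nonneg, le_div_iff₀ hs]; exact hn
    have h1 : a / s - n ≤ 1 := by rw [sub_le_iff_le_add, div_le_iff₀ hs]; linarith
    nlinarith
  have hC : 0 ≤ C := nonneg_of_mul_nonneg_left (by linarith) hs
  have hrem' : C * (a - n * s) ≤ C * s := mul_le_mul_of_nonneg_left (by linarith) hC
  rw [div_le_iff₀ ha]
  calc g a ≤ a / s * g s + 2 * C * s := by linarith
    _ = (g s / s + 2 * C * s / a) * a := by field_simp

theorem tendsto_div_nhdsGT_zero_of_subadditive_s5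
    (hsub : ∀ s ≥ 0, ∀ t ≥ 0, g (s + t) ≤ g s + g t) (hbd : ∀ s ≥ 0, |g s| ≤ C * s) :
    Tendsto (fun s => g s / s) (𝓝[>] 0) (𝓝 (sSup ((fun s => g s / s) '' Ioi 0))) := by
  have hbdd : BddAbove ((fun s => g s / s) '' Ioi 0) := by
    refine ⟨C, ?_⟩
    rintro _ ⟨s, hs, rfl⟩
    exact (div_le_iff₀ hs).2 (abs_le.1 (hbd s (le_of_lt hs))).2
  refine tendsto_order.2 ⟨fun b hb => ?_, fun b hb => ?_⟩
  · obtain ⟨_, ⟨a, ha, rfl⟩, hba⟩ := exists_lt_of_lt_csSup (nonempty_Ioi.image _) hb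
    have hlim : Tendsto (fun s => g a / a - 2 * C * s / a) (𝓝[>] 0) (𝓝 (g a / a)) := by
      have : Tendsto (fun s => g a / a - 2 * C * s / a) (𝓝 0) (𝓝 (g a / a - 2 * C * 0 / a)) :=
        ((continuous_const.sub ((continuous_const.mul continuous_id).div_const a))).tendsto 0
      simpa using this.mono_left nhdsWithin_le_nhds
    filter_upwards [hlim.eventually (lt_mem_nhds hba), Ioo_mem_nhdsGT ha] with s hs hsa
    linarith [div_le_div_add_of_subadditive hsub hbd hsa.1 hsa.2.le]
  · filter_upwards [self_mem_nhdsWithin] with s hs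
    exact (le_csSup hbdd ⟨s, hs, rfl⟩).trans_lt hb

end Subadditive

lemma Measurable.intervalIntegrable_of_abs_le {f : ℝ → ℝ} {C c a b : ℝ} (hm : Measurable f)
    (hf : ∀ x ≥ c, |f x| ≤ C) (ha : c ≤ a) (hb : c ≤ b) : IntervalIntegrable f volume a b := by
  refine (intervalIntegrable_const (c := C)).mono_fun' hm.aestronglyMeasurable ?_
  refine ae_restrict_of_forall_mem measurableSet_uIoc fun x hx => ?_
  exact hf x ((le_min ha hb).trans (uIoc_subset_uIcc hx).1)

lemma abs_limsup_le_of_eventually_abs_le {α : Type*} {l : Filter α} [l.NeBot] {u : α → ℝ}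
    {B : ℝ} (h : ∀ᶠ x in l, |u x| ≤ B) : |limsup u l| ≤ B := by
  obtain ⟨hle, hge⟩ := isBoundedUnder_le_abs.1 (isBoundedUnder_of_eventually_le h)
  exact abs_le.2
    ⟨le_limsup_of_frequently_le (h.mono fun x hx => (abs_le.1 hx).1).frequently hle,
      limsup_le_of_le hge.isCoboundedUnder_le (h.mono fun x hx => (abs_le.1 hx).2)⟩

lemma limsup_le_limsup_add_of_eventually_le_s5 {α : Type*} {l : Filter α} [l.NeBot] {u v : α → ℝ}
    {δ : ℝ} (hu : IsBoundedUnder (· ≥ ·) l u) (hv : IsBoundedUnder (· ≤ ·) l fun x => |v x|)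
    (h : ∀ᶠ x in l, u x ≤ v x + δ) : limsup u l ≤ limsup v l + δ := by
  obtain ⟨hle, hge⟩ := isBoundedUnder_le_abs.1 hv
  calc limsup u l ≤ limsup (fun x => v x + δ) l :=
        limsup_le_limsup h hu.isCoboundedUnder_le (isBoundedUnder_le_add hle isBoundedUnder_const)
    _ = limsup v l + δ := limsup_add_const l v δ hle hge.isCoboundedUnder_le

lemma limsup_comp_mul_left_atTop (v : ℝ → ℝ) {c : ℝ} (hc : 0 < c) :
    limsup (fun x => v (c * x)) atTop = limsup v atTop := by
  change limsup (v ∘ OrderIso.mulLeft₀ c hc) atTop = _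
  rw [limsup_comp, OrderIso.map_atTop]

section BoundedFunction

variable {f : ℝ → ℝ} {C : ℝ}

lemma abs_div_le_of_abs_le (hb : ∀ x ≥ (1 : ℝ), |f x| ≤ C) :
    ∀ x ≥ (1 : ℝ), |f x / x| ≤ C := fun x hx => by
  rw [abs_div, abs_of_pos (by linarith : (0 : ℝ) < x)]
  exact (div_le_self (abs_nonneg _) hx).trans (hb x hx)

lemma abs_integral_div_le_mul_log (hb : ∀ x ≥ (1 : ℝ), |f x| ≤ C)
    {a b : ℝ} (ha : 1 ≤ a) (hab : a ≤ b) :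
    |∫ t in a..b, f t / t| ≤ C * Real.log (b / a) := by
  have hpos : ∀ t ∈ uIcc a b, 0 < t := fun t ht => by
    rw [uIcc_of_le hab] at ht; linarith [ht.1]
  calc |∫ t in a..b, f t / t| = ‖∫ t in a..b, f t / t‖ := (Real.norm_eq_abs _).symm
    _ ≤ ∫ t in a..b, C * t⁻¹ := by
        refine intervalIntegral.norm_integral_le_of_norm_le hab
          (ae_of_all _ fun t ht => ?_) ((intervalIntegral.intervalIntegrable_inv (μ := volume)
            (fun t ht => (hpos t ht).ne') continuousOn_id).const_mul C)
        rw [Real.norm_eq_abs, abs_div, abs_of_pos (by linarith [ht.1] : 0 < t), ← div_eq_mul_inv]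
        exact div_le_div_of_nonneg_right (hb t (by linarith [ht.1])) (by linarith [ht.1])
    _ = C * Real.log (b / a) := by
        rw [intervalIntegral.integral_const_mul, integral_inv fun h => (hpos 0 h).false]

lemma abs_integral_div_le_of_one_le (hb : ∀ x ≥ (1 : ℝ), |f x| ≤ C) {θ x : ℝ} (hθ : 1 ≤ θ)
    (hx : 1 ≤ x) : |∫ t in x..(θ * x), f t / t| ≤ C * Real.log θ := by
  have hx0 : 0 < x := by linarith
  simpa [hx0.ne'] using abs_integral_div_le_mul_log hb hx (le_mul_of_one_le_left hx0.le hθ)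

/-- In the variable `s = log θ`, the limsup defining `innerQ` becomes subadditive. -/
noncomputable def logIntegralLimsup (f : ℝ → ℝ) (s : ℝ) : ℝ :=
  limsup (fun x => ∫ t in x..(Real.exp s * x), f t / t) atTop

lemma eventually_abs_integral_exp_le (hb : ∀ x ≥ (1 : ℝ), |f x| ≤ C) {s : ℝ} (hs : 0 ≤ s) :
    ∀ᶠ x in atTop, |∫ t in x..(Real.exp s * x), f t / t| ≤ C * s := by
  filter_upwards [eventually_ge_atTop 1] with x hx
  simpa using abs_integral_div_le_of_one_le hb (Real.one_le_exp hs) hx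

lemma abs_logIntegralLimsup_le (hb : ∀ x ≥ (1 : ℝ), |f x| ≤ C) {s : ℝ} (hs : 0 ≤ s) :
    |logIntegralLimsup f s| ≤ C * s :=
  abs_limsup_le_of_eventually_abs_le (eventually_abs_integral_exp_le hb hs)

lemma logIntegralLimsup_add_le (hm : Measurable f) (hb : ∀ x ≥ (1 : ℝ), |f x| ≤ C) {s t : ℝ}
    (hs : 0 ≤ s) (ht : 0 ≤ t) :
    logIntegralLimsup f (s + t) ≤ logIntegralLimsup f s + logIntegralLimsup f t := by
  set u := fun x => ∫ r in x..(Real.exp s * x), f r / r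
  set v := fun y => ∫ r in y..(Real.exp t * y), f r / r
  have hscale : Tendsto (fun x => Real.exp s * x) atTop atTop :=
    tendsto_id.const_mul_atTop (Real.exp_pos s)
  have hv : ∀ᶠ x in atTop, |v (Real.exp s * x)| ≤ C * t :=
    hscale.eventually (eventually_abs_integral_exp_le hb ht)
  have hsplit : ∀ᶠ x in atTop,
      ∫ r in x..(Real.exp (s + t) * x), f r / r = u x + v (Real.exp s * x) := by
    filter_upwards [eventually_ge_atTop 1] with x hx
    have hfx := abs_div_le_of_abs_le hb
    have hmeas : Measurable fun r => f r / r := hm.div measurable_id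
    have h1 : 1 ≤ Real.exp s * x := by nlinarith [Real.one_le_exp hs]
    have h2 : 1 ≤ Real.exp t * (Real.exp s * x) := by nlinarith [Real.one_le_exp ht]
    rw [Real.exp_add, mul_comm (Real.exp s), mul_assoc]
    exact (intervalIntegral.integral_add_adjacent_intervals
      (hmeas.intervalIntegrable_of_abs_le hfx hx h1)
      (hmeas.intervalIntegrable_of_abs_le hfx h1 h2)).symm
  obtain ⟨hule, huge⟩ := isBoundedUnder_le_abs.1
    (isBoundedUnder_of_eventually_le (eventually_abs_integral_exp_le hb hs))
  obtain ⟨hvle, hvge⟩ := isBoundedUnder_le_abs.1 (isBoundedUnder_of_eventually_le hv)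
  calc logIntegralLimsup f (s + t) = limsup (fun x => u x + v (Real.exp s * x)) atTop :=
        limsup_congr hsplit
    _ ≤ limsup u atTop + limsup (fun x => v (Real.exp s * x)) atTop :=
        limsup_add_le huge hule hvge.isCoboundedUnder_le hvle
    _ = logIntegralLimsup f s + logIntegralLimsup f t := by
        rw [limsup_comp_mul_left_atTop v (Real.exp_pos s)]; rfl

lemma innerQ_eq_logIntegralLimsup (hb : ∀ x ≥ (1 : ℝ), |f x| ≤ C) {θ : ℝ} (hθ : 1 < θ) :
    innerQ f θ = logIntegralLimsup f (Real.log θ) / Real.log θ := by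
  have hlog := Real.log_pos hθ
  obtain ⟨hle, hge⟩ := isBoundedUnder_le_abs.1
    (isBoundedUnder_of_eventually_le (eventually_abs_integral_exp_le hb hlog.le))
  rw [logIntegralLimsup, Real.exp_log (by linarith)] at *
  exact ((monotone_id.div_const hlog.le).map_limsup_of_continuousAt _
    (continuous_id.div_const _).continuousAt hle hge.isCoboundedUnder_le).symm

lemma tendsto_innerQ (hm : Measurable f) (hb : ∀ x ≥ (1 : ℝ), |f x| ≤ C) :
    Tendsto (innerQ f) (𝓝[>] 1)
      (𝓝 (sSup ((fun s => logIntegralLimsup f s / s) '' Ioi 0))) := by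
  have hlog : Tendsto Real.log (𝓝[>] 1) (𝓝[>] 0) := by
    refine tendsto_nhdsWithin_iff.2 ⟨?_, eventually_mem_nhdsWithin.mono fun θ hθ => Real.log_pos hθ⟩
    simpa using (Real.continuousAt_log one_ne_zero).tendsto.mono_left nhdsWithin_le_nhds
  refine ((tendsto_div_nhdsGT_zero_of_subadditive_s5
    (fun s hs t ht => logIntegralLimsup_add_le hm hb hs ht)
    (fun s hs => abs_logIntegralLimsup_le hb hs)).comp hlog).congr' ?_
  filter_upwards [self_mem_nhdsWithin] with θ hθ
  exact (innerQ_eq_logIntegralLimsup hb hθ).symm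

lemma abs_integral_div_sub_integral_div_le (hm : Measurable f) (hb : ∀ x ≥ (1 : ℝ), |f x| ≤ C)
    {θ x : ℝ} (hθ : 1 ≤ θ) (hx : 1 ≤ x) :
    |(∫ t in x..(θ * x), f t / t) - (∫ t in x..(θ * x), f t) / x| ≤ C * (θ - 1) ^ 2 := by
  have hx0 : 0 < x := by linarith
  have hxθ : x ≤ θ * x := le_mul_of_one_le_left hx0.le hθ
  have hC : 0 ≤ C := (abs_nonneg _).trans (hb 1 le_rfl)
  have hkernel : ∀ t ∈ uIoc x (θ * x), ‖f t / t - f t / x‖ ≤ C * (θ - 1) / x := by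
    intro t ht
    rw [uIoc_of_le hxθ] at ht
    have ht0 : 0 < t := hx0.trans ht.1
    have hdist : |t⁻¹ - x⁻¹| ≤ (θ - 1) / x := by
      rw [abs_sub_comm, abs_of_nonneg (sub_nonneg.2 (inv_anti₀ hx0 ht.1.le)),
        inv_sub_inv hx0.ne' ht0.ne', div_le_div_iff₀ (by positivity) hx0]
      nlinarith [ht.2, mul_le_mul_of_nonneg_left ht.1.le (sub_nonneg.2 hθ)]
    calc ‖f t / t - f t / x‖ = |f t| * |t⁻¹ - x⁻¹| := by
          rw [Real.norm_eq_abs, ← abs_mul, mul_sub, div_eq_mul_inv, div_eq_mul_inv]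
      _ ≤ C * ((θ - 1) / x) :=
          mul_le_mul (hb t (by linarith [ht.1])) hdist (abs_nonneg _) hC
      _ = C * (θ - 1) / x := by ring
  have hmeas : Measurable fun t => f t / t := hm.div measurable_id
  have hcombine : (∫ t in x..(θ * x), f t / t) - (∫ t in x..(θ * x), f t) / x
      = ∫ t in x..(θ * x), (f t / t - f t / x) := by
    rw [intervalIntegral.integral_sub
      (hmeas.intervalIntegrable_of_abs_le (abs_div_le_of_abs_le hb) hx (hx.trans hxθ))
      ((hm.intervalIntegrable_of_abs_le hb hx (hx.trans hxθ)).div_const x),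
      intervalIntegral.integral_div]
  rw [hcombine]
  calc _ ≤ C * (θ - 1) / x * |θ * x - x| :=
        intervalIntegral.norm_integral_le_of_norm_le_const hkernel
    _ = C * (θ - 1) ^ 2 := by
        rw [abs_of_nonneg (by linarith)]; field_simp

lemma abs_average_sub_logAverage_le (hm : Measurable f) (hb : ∀ x ≥ (1 : ℝ), |f x| ≤ C)
    {θ x : ℝ} (hθ : 1 < θ) (hx : 1 ≤ x) :
    |(∫ t in x..(θ * x), f t) / (θ * x - x) - (∫ t in x..(θ * x), f t / t) / Real.log θ|
      ≤ C * (|Real.log θ / (θ - 1) - 1| + (θ - 1)) := by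
  set I := ∫ t in x..(θ * x), f t
  set J := ∫ t in x..(θ * x), f t / t
  have hθ1 : 0 < θ - 1 := by linarith
  have hlog := Real.log_pos hθ
  have hJ : |J / Real.log θ| ≤ C := by
    rw [abs_div, abs_of_pos hlog, div_le_iff₀ hlog]
    exact abs_integral_div_le_of_one_le hb hθ.le hx
  have hJI : |(J - I / x) / (θ - 1)| ≤ C * (θ - 1) := by
    rw [abs_div, abs_of_pos hθ1, div_le_iff₀ hθ1, mul_assoc, ← sq]
    exact abs_integral_div_sub_integral_div_le hm hb hθ.le hx
  have hid : I / (θ * x - x) - J / Real.log θ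
      = J / Real.log θ * (Real.log θ / (θ - 1) - 1) - (J - I / x) / (θ - 1) := by
    rw [show θ * x - x = (θ - 1) * x by ring]
    field_simp
    ring
  rw [hid]
  calc _ ≤ |J / Real.log θ| * |Real.log θ / (θ - 1) - 1| + |(J - I / x) / (θ - 1)| := by
        rw [← abs_mul]; exact abs_sub _ _
    _ ≤ C * |Real.log θ / (θ - 1) - 1| + C * (θ - 1) := by
        gcongr
    _ = C * (|Real.log θ / (θ - 1) - 1| + (θ - 1)) := by ring

lemma abs_innerP_sub_innerQ_le (hm : Measurable f) (hb : ∀ x ≥ (1 : ℝ), |f x| ≤ C) {θ : ℝ}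
    (hθ : 1 < θ) : |innerP f θ - innerQ f θ| ≤ C * (|Real.log θ / (θ - 1) - 1| + (θ - 1)) := by
  set u := fun x => (∫ t in x..(θ * x), f t) / (θ * x - x)
  set v := fun x => (∫ t in x..(θ * x), f t / t) / Real.log θ
  set δ := C * (|Real.log θ / (θ - 1) - 1| + (θ - 1))
  have hlog := Real.log_pos hθ
  have huv : ∀ᶠ x in atTop, |u x - v x| ≤ δ := by
    filter_upwards [eventually_ge_atTop 1] with x hx
    exact abs_average_sub_logAverage_le hm hb hθ hx
  have hv : ∀ᶠ x in atTop, |v x| ≤ C := by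
    filter_upwards [eventually_ge_atTop 1] with x hx
    rw [abs_div, abs_of_pos hlog, div_le_iff₀ hlog]
    exact abs_integral_div_le_of_one_le hb hθ.le hx
  have hu : ∀ᶠ x in atTop, |u x| ≤ C + δ := by
    filter_upwards [huv, hv] with x h1 h2
    linarith [abs_sub_abs_le_abs_sub (u x) (v x)]
  have hPQ := limsup_le_limsup_add_of_eventually_le_s5 (δ := δ) (isBoundedUnder_le_abs.1
    (isBoundedUnder_of_eventually_le hu)).2 (isBoundedUnder_of_eventually_le hv)
    (huv.mono fun x hx => by linarith [(abs_le.1 hx).2])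
  have hQP := limsup_le_limsup_add_of_eventually_le_s5 (δ := δ) (isBoundedUnder_le_abs.1
    (isBoundedUnder_of_eventually_le hv)).2 (isBoundedUnder_of_eventually_le hu)
    (huv.mono fun x hx => by linarith [(abs_le.1 hx).1])
  change |limsup u atTop - limsup v atTop| ≤ δ
  exact abs_sub_le_iff.2 ⟨by linarith, by linarith⟩

end BoundedFunction

lemma tendsto_log_div_sub_one_nhdsGT_one :
    Tendsto (fun θ => Real.log θ / (θ - 1)) (𝓝[>] 1) (𝓝 1) := by
  have hslope := hasDerivAt_iff_tendsto_slope.1 (Real.hasDerivAt_log one_ne_zero)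
  have hright : Tendsto (slope Real.log 1) (𝓝[>] 1) (𝓝 1) := by
    simpa using hslope.mono_left (nhdsWithin_mono _ fun θ (hθ : θ ∈ Ioi 1) => ne_of_gt hθ)
  refine hright.congr fun θ => ?_
  rw [slope_def_field, Real.log_one, sub_zero]

/-- For every `f ∈ L^∞([1,∞))`, the sublinear functionals `P̄` and `Q̄` coincide. -/
theorem Pbar_eq_Qbar (f : ℝ → ℝ) (C : ℝ)
    (hm : Measurable f) (hb : ∀ x ≥ (1 : ℝ), |f x| ≤ C) :
    ∃ L : ℝ, Tendsto (innerP f) (𝓝[>] (1 : ℝ)) (𝓝 L) ∧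
      Tendsto (innerQ f) (𝓝[>] (1 : ℝ)) (𝓝 L) := by
  have hQ := tendsto_innerQ hm hb
  refine ⟨_, ?_, hQ⟩
  have hgap : Tendsto (fun θ => C * (|Real.log θ / (θ - 1) - 1| + (θ - 1))) (𝓝[>] 1) (𝓝 0) := by
    have hid : Tendsto (fun θ : ℝ => θ) (𝓝[>] 1) (𝓝 1) := nhdsWithin_le_nhds
    simpa using (((tendsto_log_div_sub_one_nhdsGT_one.sub_const 1).abs).add
      (hid.sub_const 1)).const_mul C
  have hPQ : Tendsto (fun θ => innerP f θ - innerQ f θ) (𝓝[>] 1) (𝓝 0) :=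
    squeeze_zero_norm' (eventually_mem_nhdsWithin.mono fun θ hθ =>
      abs_innerP_sub_innerQ_le hm hb hθ) hgap
  simpa using hQ.add hPQ
end

section
/- Let g : ℝ → ℝ be bounded and locally absolutely continuous, and suppose that (eˣ·g(x))′ = α·eˣ for almost every x ∈ ℝ. Then g(x) = α for every x ∈ ℝ. -/
open Filter MeasureTheory Set Topology

/-- If `g : ℝ → ℝ` is bounded and `x ↦ eˣ g(x)` is locally absolutely continuous
with `(eˣ g(x))′ = α eˣ` a.e. (expressed via the fundamental theorem of calculus:
`e^b g(b) − e^a g(a) = ∫_a^b α eᵗ dt` for all `a, b`), then `g ≡ α`. -/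
theorem bounded_solution_eq_const (g : ℝ → ℝ) (α C : ℝ)
    (hb : ∀ x : ℝ, |g x| ≤ C)
    (hAC : ∀ a b : ℝ,
      Real.exp b * g b - Real.exp a * g a = ∫ t in a..b, α * Real.exp t) :
    ∀ x : ℝ, g x = α := by
  -- e^x (g x - α) is constant in x
  have hconst : ∀ a b : ℝ,
      Real.exp b * (g b - α) = Real.exp a * (g a - α) := by
    intro a b
    have h := hAC a b
    rw [intervalIntegral.integral_const_mul, integral_exp] at h
    ring_nf
    ring_nf at h
    linarith
  intro x
  have hbound : ∀ a : ℝ, |Real.exp x * (g x - α)| ≤ Real.exp a * (C + |α|) := by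
    intro a
    rw [hconst a x, abs_mul, abs_of_pos (Real.exp_pos a)]
    apply mul_le_mul_of_nonneg_left _ (Real.exp_pos a).le
    calc |g a - α| ≤ |g a| + |α| := abs_sub _ _
      _ ≤ C + |α| := by linarith [hb a]
  have htend : Tendsto (fun a : ℝ => Real.exp a * (C + |α|)) atBot (nhds 0) := by
    simpa using Real.tendsto_exp_atBot.mul_const (C + |α|)
  have h0 : |Real.exp x * (g x - α)| ≤ 0 :=
    ge_of_tendsto htend (Eventually.of_forall hbound)
  have := abs_nonneg (Real.exp x * (g x - α))
  have hx0 : Real.exp x * (g x - α) = 0 := by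
    rw [← abs_eq_zero]; linarith
  have hne := (Real.exp_pos x).ne'
  rcases mul_eq_zero.mp hx0 with h | h
  · exact absurd h hne
  · linarith
end

section
/- Let f ∈ L^∞([0,∞)) with lim_{x→∞} e^{−x}∫₀ˣ f(t)eᵗ dt = α. Then for every φ ∈ L¹([0,∞)), lim_{s→∞} ∫₀^∞ f(x+s)φ(x)dx = α·∫₀^∞ φ(x)dx. (That is, R(f) = α implies the translates f(·+s) converge weak* to the constant α in L^∞([0,∞)).) -/
/-!
Write `A g x = e⁻ˣ ∫₀ˣ g(t) eᵗ dt` (`abelMean g x`), so that `(A g)' = g - A g`. Integrating by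
parts against a compactly supported `C¹` function `ψ` gives `∫₀^∞ g ψ = ∫₀^∞ A g · (ψ - ψ')`. For
the translate `g = f(· + s)` one has `A g x = A f (x + s) - e⁻ˣ A f s → α (1 - e⁻ˣ) = α · A 1 x`,
so by dominated convergence `∫₀^∞ f(x + s) ψ(x) dx → α ∫₀^∞ A 1 · (ψ - ψ') = α ∫₀^∞ ψ`. The
functionals `φ ↦ ∫₀^∞ f(x + s) φ(x) dx` are bounded by `C ‖φ‖₁` uniformly in `s`, and smooth
compactly supported functions are dense in `L¹`, so the convergence extends to every integrable
`φ`.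
-/

open Filter MeasureTheory Set Topology
open scoped ContDiff

theorem setIntegral_Ici_eq_intervalIntegral {E : Type*} [NormedAddCommGroup E] [NormedSpace ℝ E]
    {F : ℝ → E} {a b : ℝ} (hab : a ≤ b) (hF : ∀ x, b < x → F x = 0) :
    ∫ x in Ici a, F x = ∫ x in a..b, F x := by
  rw [integral_Ici_eq_integral_Ioi, intervalIntegral.integral_of_le hab]
  exact setIntegral_eq_of_subset_of_forall_sdiff_eq_zero measurableSet_Ioi Ioc_subset_Ioi_self
    fun x hx => hF x (not_le.1 fun h => hx.2 ⟨hx.1, h⟩)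

theorem locallyIntegrable_of_abs_le {g : ℝ → ℝ} {C : ℝ} (hg : AEStronglyMeasurable g)
    (hC : ∀ x, |g x| ≤ C) : LocallyIntegrable g :=
  (locallyIntegrable_const C).mono hg
    (ae_of_all _ fun x => (hC x).trans (le_abs_self C))

theorem tendsto_of_forall_approx {ι : Type*} {l : Filter ι} {F : ι → ℝ} {L : ℝ}
    (h : ∀ ε > 0, ∃ G : ι → ℝ, ∃ L', Tendsto G l (𝓝 L') ∧ (∀ i, |F i - G i| ≤ ε) ∧
      |L' - L| ≤ ε) :
    Tendsto F l (𝓝 L) := by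
  refine Metric.tendsto_nhds.2 fun ε hε => ?_
  obtain ⟨G, L', hG, hFG, hL⟩ := h (ε / 3) (by positivity)
  filter_upwards [Metric.tendsto_nhds.1 hG (ε / 3) (by positivity)] with i hi
  rw [Real.dist_eq] at hi ⊢
  linarith [abs_sub_le (F i) (G i) L, abs_sub_le (G i) L' L, hFG i]

theorem MeasureTheory.Integrable.exists_contDiff_hasCompactSupport_integral_norm_sub_le
    {E F : Type*} [NormedAddCommGroup E] [NormedSpace ℝ E] [FiniteDimensional ℝ E]
    [MeasurableSpace E] [BorelSpace E] {μ : Measure E} [IsFiniteMeasureOnCompacts μ]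
    [NormedAddCommGroup F] [NormedSpace ℝ F] {φ : E → F} (hφ : Integrable φ μ) {ε : ℝ}
    (hε : 0 < ε) :
    ∃ ψ : E → F, ContDiff ℝ ∞ ψ ∧ HasCompactSupport ψ ∧ ∫ x, ‖φ x - ψ x‖ ∂μ ≤ ε := by
  obtain ⟨ψ, hψc, hψ, hle⟩ :=
    (memLp_one_iff_integrable.2 hφ).exist_eLpNorm_sub_le ENNReal.one_ne_top le_rfl hε
  refine ⟨ψ, hψ, hψc, ?_⟩
  rw [eLpNorm_one_eq_lintegral_enorm] at hle
  rw [integral_norm_eq_lintegral_enorm (f := fun x => φ x - ψ x)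
    (hφ.aestronglyMeasurable.sub hψ.continuous.aestronglyMeasurable)]
  exact ENNReal.toReal_le_of_le_ofReal hε.le hle

theorem abs_integral_mul_sub_integral_mul_le {α : Type*} [MeasurableSpace α] {μ : Measure α}
    {h φ ψ : α → ℝ} {C : ℝ} (hh : AEStronglyMeasurable h μ) (hC : ∀ᵐ x ∂μ, |h x| ≤ C)
    (hφ : Integrable φ μ) (hψ : Integrable ψ μ) :
    |∫ x, h x * φ x ∂μ - ∫ x, h x * ψ x ∂μ| ≤ C * ∫ x, ‖φ x - ψ x‖ ∂μ := by
  have hC' : ∀ᵐ x ∂μ, ‖h x‖ ≤ C := hC.mono fun x hx => by rwa [Real.norm_eq_abs]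
  rw [← integral_sub (hφ.bdd_mul hh hC') (hψ.bdd_mul hh hC'), ← integral_const_mul,
    ← Real.norm_eq_abs]
  refine norm_integral_le_of_norm_le ((hφ.sub hψ).norm.const_mul C) (hC'.mono fun x hx => ?_)
  rw [← mul_sub, norm_mul]
  exact mul_le_mul_of_nonneg_right hx (norm_nonneg _)

theorem tendsto_integral_mul_of_forall_contDiff {E : Type*} [NormedAddCommGroup E]
    [NormedSpace ℝ E] [FiniteDimensional ℝ E] [MeasurableSpace E] [BorelSpace E]
    {μ : Measure E} [IsFiniteMeasureOnCompacts μ] {ι : Type*} {l : Filter ι} {h : ι → E → ℝ}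
    {C α : ℝ} (hh : ∀ i, AEStronglyMeasurable (h i) μ) (hC : ∀ i, ∀ᵐ x ∂μ, |h i x| ≤ C)
    (hlim : ∀ ψ : E → ℝ, ContDiff ℝ ∞ ψ → HasCompactSupport ψ →
      Tendsto (fun i => ∫ x, h i x * ψ x ∂μ) l (𝓝 (α * ∫ x, ψ x ∂μ)))
    {φ : E → ℝ} (hφ : Integrable φ μ) :
    Tendsto (fun i => ∫ x, h i x * φ x ∂μ) l (𝓝 (α * ∫ x, φ x ∂μ)) := by
  refine tendsto_of_forall_approx fun ε hε => ?_
  have hK : 0 < |C| + |α| + 1 := by positivity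
  obtain ⟨ψ, hψ, hψc, hφψ⟩ :=
    hφ.exists_contDiff_hasCompactSupport_integral_norm_sub_le (div_pos hε hK)
  have hψi : Integrable ψ μ := hψ.continuous.integrable_of_hasCompactSupport hψc
  have hsmall : (|C| + |α|) * (ε / (|C| + |α| + 1)) ≤ ε := by
    calc (|C| + |α|) * (ε / (|C| + |α| + 1)) ≤ (|C| + |α| + 1) * (ε / (|C| + |α| + 1)) :=
          mul_le_mul_of_nonneg_right (by linarith) (div_pos hε hK).le
      _ = ε := mul_div_cancel₀ _ hK.ne'
  have hnorm : 0 ≤ ∫ x, ‖φ x - ψ x‖ ∂μ := integral_nonneg fun _ => norm_nonneg _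
  refine ⟨_, _, hlim ψ hψ hψc, fun i => ?_, ?_⟩
  · calc _ ≤ C * ∫ x, ‖φ x - ψ x‖ ∂μ :=
          abs_integral_mul_sub_integral_mul_le (hh i) (hC i) hφ hψi
      _ ≤ |C| * (ε / (|C| + |α| + 1)) := mul_le_mul (le_abs_self C) hφψ hnorm (abs_nonneg _)
      _ ≤ ε := by nlinarith [abs_nonneg α, div_pos hε hK]
  · have : |∫ x, ψ x ∂μ - ∫ x, φ x ∂μ| ≤ ∫ x, ‖φ x - ψ x‖ ∂μ := by
      rw [← integral_sub hψi hφ, ← Real.norm_eq_abs]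
      simpa only [norm_sub_rev] using norm_integral_le_integral_norm (fun x => ψ x - φ x)
    calc _ = |α| * |∫ x, ψ x ∂μ - ∫ x, φ x ∂μ| := by rw [← mul_sub, abs_mul]
      _ ≤ |α| * (ε / (|C| + |α| + 1)) :=
          mul_le_mul_of_nonneg_left (this.trans hφψ) (abs_nonneg _)
      _ ≤ ε := by nlinarith [abs_nonneg C, div_pos hε hK]

noncomputable def abelMean (g : ℝ → ℝ) (x : ℝ) : ℝ :=
  Real.exp (-x) * ∫ t in (0 : ℝ)..x, g t * Real.exp t

section AbelMean

variable {g : ℝ → ℝ} {C : ℝ}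

theorem MeasureTheory.LocallyIntegrable.intervalIntegrable_mul_exp (hg : LocallyIntegrable g)
    (a b : ℝ) : IntervalIntegrable (fun t => g t * Real.exp t) volume a b :=
  ((hg.mul_continuous Real.continuous_exp).integrableOn_isCompact isCompact_uIcc).intervalIntegrable

theorem continuous_abelMean (hg : LocallyIntegrable g) : Continuous (abelMean g) :=
  (Real.continuous_exp.comp continuous_neg).mul
    (intervalIntegral.continuous_primitive hg.intervalIntegrable_mul_exp 0)

theorem abs_abelMean_le (hC : ∀ t, 0 ≤ t → |g t| ≤ C) {x : ℝ} (hx : 0 ≤ x) :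
    |abelMean g x| ≤ C := by
  have hC0 : 0 ≤ C := (abs_nonneg _).trans (hC 0 le_rfl)
  have hint : |∫ t in (0 : ℝ)..x, g t * Real.exp t| ≤ C * (Real.exp x - 1) := by
    rw [← Real.norm_eq_abs, ← Real.exp_zero, ← integral_exp, ← intervalIntegral.integral_const_mul]
    refine intervalIntegral.norm_integral_le_of_norm_le hx (ae_of_all _ fun t ht => ?_)
      ((continuous_const.mul Real.continuous_exp).intervalIntegrable _ _)
    rw [norm_mul, Real.norm_of_nonneg (Real.exp_pos t).le]
    exact mul_le_mul_of_nonneg_right (hC t ht.1.le) (Real.exp_pos t).le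
  calc |abelMean g x| ≤ Real.exp (-x) * (C * (Real.exp x - 1)) := by
        rw [abelMean, abs_mul, abs_of_pos (Real.exp_pos _)]
        exact mul_le_mul_of_nonneg_left hint (Real.exp_pos _).le
    _ = C - C * Real.exp (-x) := by
        rw [Real.exp_neg]; field_simp
    _ ≤ C := by nlinarith [Real.exp_pos (-x)]

theorem abelMean_one (x : ℝ) : abelMean (fun _ => 1) x = 1 - Real.exp (-x) := by
  simp only [abelMean, one_mul, integral_exp, Real.exp_zero, mul_sub, mul_one, ← Real.exp_add,
    neg_add_cancel]

theorem abelMean_comp_add_right (hg : LocallyIntegrable g) (s x : ℝ) :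
    abelMean (fun t => g (t + s)) x = abelMean g (x + s) - Real.exp (-x) * abelMean g s := by
  have hshift : (fun t => g (t + s) * Real.exp t) =
      fun t => Real.exp (-s) * (fun u => g u * Real.exp u) (t + s) := by
    ext t
    simp only [Real.exp_add, Real.exp_neg]
    field_simp
  rw [abelMean, abelMean, abelMean, hshift, intervalIntegral.integral_const_mul,
    intervalIntegral.integral_comp_add_right (fun u => g u * Real.exp u), zero_add,
    ← intervalIntegral.integral_interval_sub_left (hg.intervalIntegrable_mul_exp 0 (x + s))
      (hg.intervalIntegrable_mul_exp 0 s), neg_add, Real.exp_add]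
  ring

theorem abelMean_indicator_Ici {x : ℝ} (hx : 0 ≤ x) :
    abelMean ((Ici 0).indicator g) x = abelMean g x := by
  rw [abelMean, abelMean, intervalIntegral.integral_congr fun t ht => ?_]
  rw [uIcc_of_le hx] at ht
  simp only [indicator_of_mem (show t ∈ Ici 0 from ht.1)]

theorem setIntegral_Ici_mul_eq_setIntegral_abelMean_mul (hg : LocallyIntegrable g) {ψ : ℝ → ℝ}
    (hψ : ContDiff ℝ 1 ψ) (hψc : HasCompactSupport ψ) :
    ∫ x in Ici 0, g x * ψ x = ∫ x in Ici 0, abelMean g x * (ψ x - deriv ψ x) := by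
  obtain ⟨N, hN0, hψN⟩ : ∃ N : ℝ, 0 ≤ N ∧ ∀ x, N ≤ x → x ∉ tsupport ψ := by
    obtain ⟨A, hA⟩ := hψc.isCompact.bddAbove
    exact ⟨max A 0 + 1, by positivity, fun x hx hmem => by
      linarith [hA hmem, le_max_left A 0]⟩
  have hψ0 : ∀ x, N ≤ x → ψ x = 0 := fun x hx => image_eq_zero_of_notMem_tsupport (hψN x hx)
  have hψ'0 : ∀ x, N ≤ x → deriv ψ x = 0 := fun x hx => deriv_of_notMem_tsupport (hψN x hx)
  rw [setIntegral_Ici_eq_intervalIntegral hN0 fun x hx => by simp [hψ0 x hx.le],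
    setIntegral_Ici_eq_intervalIntegral hN0 fun x hx => by simp [hψ0 x hx.le, hψ'0 x hx.le]]
  set F : ℝ → ℝ := fun x => ∫ t in (0 : ℝ)..x, g t * Real.exp t
  set v : ℝ → ℝ := fun x => Real.exp (-x) * ψ x
  have hF : AbsolutelyContinuousOnInterval F 0 N :=
    (hg.intervalIntegrable_mul_exp 0 N).absolutelyContinuousOnInterval_intervalIntegral (by simp)
  have hv : AbsolutelyContinuousOnInterval v 0 N :=
    ((Real.contDiff_exp.comp contDiff_neg).mul hψ).contDiffOn.absolutelyContinuousOnInterval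
  have hF' : ∀ᵐ x, deriv F x = g x * Real.exp x :=
    (LocallyIntegrable.ae_hasDerivAt_integral (hg.mul_continuous Real.continuous_exp)).mono
      fun x hx => (hx 0).deriv
  have hv' : ∀ x, deriv v x = Real.exp (-x) * (deriv ψ x - ψ x) := fun x => by
    have := ((hasDerivAt_neg x).exp.fun_mul (hψ.differentiable one_ne_zero x).hasDerivAt).deriv
    simp only [v, this]
    ring
  have hparts := hF.integral_mul_deriv_eq_deriv_mul hv
  have hleft : ∫ x in (0 : ℝ)..N, F x * deriv v x =
      -∫ x in (0 : ℝ)..N, abelMean g x * (ψ x - deriv ψ x) := by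
    rw [← intervalIntegral.integral_neg]
    refine intervalIntegral.integral_congr fun x _ => ?_
    simp only [hv', abelMean, F]
    ring
  have hright : ∫ x in (0 : ℝ)..N, deriv F x * v x = ∫ x in (0 : ℝ)..N, g x * ψ x := by
    refine intervalIntegral.integral_congr_ae (hF'.mono fun x hx _ => ?_)
    rw [hx, mul_assoc, ← mul_assoc (Real.exp x), ← Real.exp_add, add_neg_cancel, Real.exp_zero,
      one_mul]
  simp only [hleft, hright, v, hψ0 N le_rfl, F, intervalIntegral.integral_same] at hparts
  linarith

end AbelMean

theorem tendsto_setIntegral_comp_add_mul_of_tendsto_abelMean {g : ℝ → ℝ} {C α : ℝ}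
    (hg : Measurable g) (hC : ∀ x, |g x| ≤ C) (hα : Tendsto (abelMean g) atTop (𝓝 α))
    {ψ : ℝ → ℝ} (hψ : ContDiff ℝ 1 ψ) (hψc : HasCompactSupport ψ) :
    Tendsto (fun s => ∫ x in Ici 0, g (x + s) * ψ x) atTop (𝓝 (α * ∫ x in Ici 0, ψ x)) := by
  have hloc : ∀ s, LocallyIntegrable fun x => g (x + s) := fun s =>
    locallyIntegrable_of_abs_le (hg.comp (measurable_add_const s)).aestronglyMeasurable
      fun x => hC _
  have hone : ∫ x in Ici 0, ψ x = ∫ x in Ici 0, abelMean (fun _ => 1) x * (ψ x - deriv ψ x) := by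
    simpa using setIntegral_Ici_mul_eq_setIntegral_abelMean_mul (locallyIntegrable_const 1) hψ hψc
  simp_rw [setIntegral_Ici_mul_eq_setIntegral_abelMean_mul (hloc _) hψ hψc, hone,
    ← integral_const_mul, ← mul_assoc]
  have hψ' : Continuous fun x => ψ x - deriv ψ x := hψ.continuous.sub (hψ.continuous_deriv le_rfl)
  refine tendsto_integral_filter_of_dominated_convergence (fun x => C * |ψ x - deriv ψ x|)
    (.of_forall fun s => ((continuous_abelMean (hloc s)).mul hψ').aestronglyMeasurable)
    (.of_forall fun s => ?_)
    ((hψ'.integrable_of_hasCompactSupport (hψc.sub hψc.deriv)).abs.const_mul C).integrableOn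
    (.of_forall fun x => ?_)
  · filter_upwards [ae_restrict_mem measurableSet_Ici] with x hx
    rw [norm_mul, Real.norm_eq_abs, Real.norm_eq_abs]
    exact mul_le_mul_of_nonneg_right (abs_abelMean_le (fun t _ => hC _) hx) (abs_nonneg _)
  · refine Tendsto.mul_const _ ?_
    simp only [abelMean_comp_add_right (locallyIntegrable_of_abs_le hg.aestronglyMeasurable hC),
      abelMean_one]
    have := (hα.comp (tendsto_atTop_add_const_left atTop x tendsto_id)).sub
      (hα.const_mul (Real.exp (-x)))
    rw [show α * (1 - Real.exp (-x)) = α - Real.exp (-x) * α by ring]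
    exact this

/-- If `R(f) = lim_{x→∞} e^{−x}∫₀ˣ f(t)eᵗ dt = α`, then the translates
`f(·+s)` converge weak* in `L^∞([0,∞))` to the constant `α`. -/
theorem abel_limit_implies_weakStar_translates (f : ℝ → ℝ) (C α : ℝ)
    (hm : Measurable f) (hb : ∀ x ≥ (0 : ℝ), |f x| ≤ C)
    (hR : Tendsto (fun x : ℝ =>
        Real.exp (-x) * ∫ t in (0 : ℝ)..x, f t * Real.exp t) atTop (𝓝 α)) :
    ∀ φ : ℝ → ℝ, IntegrableOn φ (Ici (0 : ℝ)) →
      Tendsto (fun s : ℝ => ∫ x in Ici (0 : ℝ), f (x + s) * φ x) atTop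
        (𝓝 (α * ∫ x in Ici (0 : ℝ), φ x)) := by
  intro φ hφ
  -- `f` is arbitrary on `(-∞, 0)`; the lemmas above need a globally bounded function
  set f₀ := (Ici (0 : ℝ)).indicator f
  have hf₀m : Measurable f₀ := hm.indicator measurableSet_Ici
  have hf₀C : ∀ x, |f₀ x| ≤ C := fun x => by
    by_cases hx : 0 ≤ x
    · simpa [f₀, hx] using hb x hx
    · simpa [f₀, hx] using (abs_nonneg _).trans (hb 0 le_rfl)
  have hR₀ : Tendsto (abelMean f₀) atTop (𝓝 α) :=
    hR.congr' ((eventually_ge_atTop 0).mono fun x hx => (abelMean_indicator_Ici hx).symm)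
  have hlim := tendsto_integral_mul_of_forall_contDiff (h := fun s x => f₀ (x + s))
    (fun s => (hf₀m.comp (measurable_add_const s)).aestronglyMeasurable)
    (fun s => ae_of_all _ fun x => hf₀C _)
    (fun ψ hψ hψc => tendsto_setIntegral_comp_add_mul_of_tendsto_abelMean hf₀m hf₀C hR₀
      (hψ.of_le (by norm_cast)) hψc) hφ
  refine hlim.congr' ((eventually_ge_atTop 0).mono fun s hs => ?_)
  refine setIntegral_congr_fun measurableSet_Ici fun x hx => ?_
  simp [f₀, indicator_of_mem (show x + s ∈ Ici 0 from add_nonneg hx hs)]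
end

section
/- Let f ∈ L^∞([0,∞)) be such that for every φ ∈ L¹([0,∞)), lim_{s→∞} ∫₀^∞ f(x+s)φ(x)dx = α·∫₀^∞ φ(x)dx. Then lim_{x→∞} e^{−x}∫₀ˣ f(t)eᵗ dt = α. (Weak* convergence of translates to the constant α implies R(f) = α.) -/
open Filter MeasureTheory Set Topology

/-- If the translates `f(·+s)` of `f ∈ L^∞([0,∞))` converge weak* to the
constant `α`, then `R(f) = lim_{x→∞} e^{−x}∫₀ˣ f(t)eᵗ dt = α`. -/
theorem weakStar_translates_implies_abel_limit (f : ℝ → ℝ) (C α : ℝ)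
    (hm : Measurable f) (hb : ∀ x ≥ (0 : ℝ), |f x| ≤ C)
    (hw : ∀ φ : ℝ → ℝ, IntegrableOn φ (Ici (0 : ℝ)) →
      Tendsto (fun s : ℝ => ∫ x in Ici (0 : ℝ), f (x + s) * φ x) atTop
        (𝓝 (α * ∫ x in Ici (0 : ℝ), φ x))) :
    Tendsto (fun x : ℝ =>
        Real.exp (-x) * ∫ t in (0 : ℝ)..x, f t * Real.exp t) atTop (𝓝 α) := by
  have hC : 0 ≤ C := le_trans (abs_nonneg _) (hb 0 le_rfl)
  have hmeas : Measurable fun t => f t * Real.exp t := hm.mul Real.measurable_exp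
  have hint : ∀ a b : ℝ, 0 ≤ a → a ≤ b →
      IntervalIntegrable (fun t => f t * Real.exp t) volume a b := by
    intro a b ha hab
    rw [intervalIntegrable_iff_integrableOn_Ioc_of_le hab]
    apply Measure.integrableOn_of_bounded measure_Ioc_lt_top.ne hmeas.aestronglyMeasurable
      (M := C * Real.exp b)
    filter_upwards [ae_restrict_mem measurableSet_Ioc] with t ht
    rw [norm_mul, Real.norm_eq_abs, Real.norm_eq_abs, abs_of_pos (Real.exp_pos t)]
    exact mul_le_mul (hb t (ha.trans ht.1.le)) (Real.exp_le_exp.2 ht.2)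
      (Real.exp_pos t).le hC
  -- key lemma for each T
  have key : ∀ T : ℝ, 0 < T →
      Tendsto (fun s : ℝ => Real.exp (-(s + T)) * ∫ t in s..(s + T), f t * Real.exp t)
        atTop (𝓝 (α * (1 - Real.exp (-T)))) := by
    intro T hT
    set φ : ℝ → ℝ := (Icc (0 : ℝ) T).indicator (fun x => Real.exp (x - T)) with hφdef
    have hφI : Integrable φ volume := (integrable_indicator_iff measurableSet_Icc).2
      ((continuous_id.sub continuous_const).rexp.continuousOn.integrableOn_Icc)
    have hφint : IntegrableOn φ (Ici (0 : ℝ)) := hφI.integrableOn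
    have hφval : ∫ x in Ici (0 : ℝ), φ x = 1 - Real.exp (-T) := by
      rw [hφdef, setIntegral_indicator measurableSet_Icc]
      have h1 : Ici (0 : ℝ) ∩ Icc 0 T = Icc 0 T :=
        inter_eq_self_of_subset_right Icc_subset_Ici_self
      rw [h1, integral_Icc_eq_integral_Ioc, ← intervalIntegral.integral_of_le hT.le,
        intervalIntegral.integral_comp_sub_right (fun x => Real.exp x) T]
      simp [integral_exp, Real.exp_zero]
    have hFeq : ∀ s : ℝ, ∫ x in Ici (0 : ℝ), f (x + s) * φ x
        = Real.exp (-(s + T)) * ∫ t in s..(s + T), f t * Real.exp t := by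
      intro s
      have e1 : ∀ x : ℝ, f (x + s) * φ x
          = (Icc (0 : ℝ) T).indicator (fun x => f (x + s) * Real.exp (x - T)) x := by
        intro x
        rw [hφdef]
        by_cases hmem : x ∈ Icc (0:ℝ) T
        · simp [Set.indicator_of_mem hmem]
        · simp [Set.indicator_of_notMem hmem]
      calc ∫ x in Ici (0 : ℝ), f (x + s) * φ x
          = ∫ x in Ici (0 : ℝ),
              (Icc (0 : ℝ) T).indicator (fun x => f (x + s) * Real.exp (x - T)) x := by
            simp_rw [e1]
        _ = ∫ x in Icc (0 : ℝ) T, f (x + s) * Real.exp (x - T) := by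
            rw [setIntegral_indicator measurableSet_Icc,
              inter_eq_self_of_subset_right Icc_subset_Ici_self]
        _ = ∫ x in (0 : ℝ)..T, f (x + s) * Real.exp (x - T) := by
            rw [integral_Icc_eq_integral_Ioc, intervalIntegral.integral_of_le hT.le]
        _ = ∫ x in (0 : ℝ)..T,
              Real.exp (-(s + T)) * (f (x + s) * Real.exp (x + s)) := by
            apply intervalIntegral.integral_congr
            intro x _
            have h2 : Real.exp (x - T) = Real.exp (-(s + T)) * Real.exp (x + s) := by
              rw [← Real.exp_add]; congr 1; ring
            simp only []
            rw [h2]; ring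
        _ = Real.exp (-(s + T)) * ∫ x in (0 : ℝ)..T, f (x + s) * Real.exp (x + s) := by
            rw [intervalIntegral.integral_const_mul]
        _ = Real.exp (-(s + T)) * ∫ t in s..(s + T), f t * Real.exp t := by
            rw [intervalIntegral.integral_comp_add_right (fun t => f t * Real.exp t) s,
              zero_add, add_comm T s]
    have := hw φ hφint
    rw [hφval] at this
    simpa only [hFeq] using this
  -- epsilon argument
  rw [Metric.tendsto_atTop]
  intro ε hε
  -- choose T with (C + |α|) * exp (-T) < ε/2
  have htend : Tendsto (fun T : ℝ => (C + |α|) * Real.exp (-T)) atTop (𝓝 0) := by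
    simpa using Real.tendsto_exp_neg_atTop_nhds_zero.const_mul (C + |α|)
  have hev : ∀ᶠ T in atTop, (C + |α|) * Real.exp (-T) < ε / 2 := by
    have := htend.eventually (eventually_lt_nhds (show (0:ℝ) < ε / 2 by linarith))
    simpa using this
  obtain ⟨T, hTsm, hT0⟩ := (hev.and (eventually_gt_atTop 0)).exists
  obtain ⟨s₀, hs₀⟩ := (Metric.tendsto_atTop.mp (key T hT0)) (ε / 2) (by linarith)
  refine ⟨max s₀ 0 + T, fun x hx => ?_⟩
  have hxT : 0 ≤ x - T := by
    have : (0:ℝ) ≤ max s₀ 0 := le_max_right _ _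
    linarith
  have hsx : s₀ ≤ x - T := by
    have : s₀ ≤ max s₀ 0 := le_max_left _ _
    linarith
  have hsplit : (∫ t in (0:ℝ)..x, f t * Real.exp t)
      = (∫ t in (0:ℝ)..(x - T), f t * Real.exp t)
        + ∫ t in (x - T)..x, f t * Real.exp t := by
    rw [intervalIntegral.integral_add_adjacent_intervals (hint 0 (x - T) le_rfl hxT)
      (hint (x - T) x hxT (by linarith))]
  have hdist2 : |Real.exp (-x) * (∫ t in (x - T)..x, f t * Real.exp t)
      - α * (1 - Real.exp (-T))| < ε / 2 := by
    have h3 := hs₀ (x - T) hsx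
    rw [Real.dist_eq] at h3
    have htail : Real.exp (-x) * (∫ t in (x - T)..x, f t * Real.exp t)
        = Real.exp (-((x - T) + T)) * ∫ t in (x - T)..((x - T) + T), f t * Real.exp t := by
      norm_num
    rw [htail]
    exact h3
  -- bound head term
  have hhead : |Real.exp (-x) * ∫ t in (0:ℝ)..(x - T), f t * Real.exp t|
      ≤ C * Real.exp (-T) := by
    have hCexp : IntervalIntegrable (fun t => C * Real.exp t) volume 0 (x - T) :=
      (continuous_const.mul Real.continuous_exp).intervalIntegrable _ _
    have habs : |∫ t in (0:ℝ)..(x - T), f t * Real.exp t|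
        ≤ ∫ t in (0:ℝ)..(x - T), C * Real.exp t := by
      refine le_trans (intervalIntegral.abs_integral_le_integral_abs hxT) ?_
      refine intervalIntegral.integral_mono_on hxT (hint 0 (x - T) le_rfl hxT).abs hCexp ?_
      intro t ht
      rw [abs_mul, abs_of_pos (Real.exp_pos t)]
      exact mul_le_mul_of_nonneg_right (hb t ht.1) (Real.exp_pos t).le
    have hval : (∫ t in (0:ℝ)..(x - T), C * Real.exp t) = C * (Real.exp (x - T) - 1) := by
      rw [intervalIntegral.integral_const_mul, integral_exp, Real.exp_zero]
    rw [abs_mul, abs_of_pos (Real.exp_pos (-x))]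
    calc Real.exp (-x) * |∫ t in (0:ℝ)..(x - T), f t * Real.exp t|
        ≤ Real.exp (-x) * (C * (Real.exp (x - T) - 1)) := by
          rw [← hval]; exact mul_le_mul_of_nonneg_left habs (Real.exp_pos (-x)).le
      _ ≤ Real.exp (-x) * (C * Real.exp (x - T)) := by
          apply mul_le_mul_of_nonneg_left _ (Real.exp_pos (-x)).le
          nlinarith [Real.exp_pos (x - T)]
      _ = C * Real.exp (-T) := by
          rw [show Real.exp (-x) * (C * Real.exp (x - T))
              = C * (Real.exp (-x) * Real.exp (x - T)) by ring, ← Real.exp_add]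
          congr 2; ring
  rw [Real.dist_eq, hsplit, mul_add]
  have hre : Real.exp (-x) * (∫ t in (0:ℝ)..(x - T), f t * Real.exp t)
        + Real.exp (-x) * (∫ t in (x - T)..x, f t * Real.exp t) - α
      = Real.exp (-x) * (∫ t in (0:ℝ)..(x - T), f t * Real.exp t)
        + (Real.exp (-x) * (∫ t in (x - T)..x, f t * Real.exp t)
            - α * (1 - Real.exp (-T)))
        + (-(α * Real.exp (-T))) := by ring
  rw [hre]
  have htri := abs_add_three
    (Real.exp (-x) * (∫ t in (0:ℝ)..(x - T), f t * Real.exp t))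
    (Real.exp (-x) * (∫ t in (x - T)..x, f t * Real.exp t) - α * (1 - Real.exp (-T)))
    (-(α * Real.exp (-T)))
  rw [abs_neg] at htri
  have h4 : |α * Real.exp (-T)| = |α| * Real.exp (-T) := by
    rw [abs_mul, abs_of_pos (Real.exp_pos (-T))]
  have heq : C * Real.exp (-T) + |α| * Real.exp (-T) = (C + |α|) * Real.exp (-T) := by
    ring
  linarith [htri, hhead, hdist2, hTsm]
end

section
/- Let f ∈ L^∞([1,∞)). Then lim_{x→∞} (1/x)∫₁ˣ f(t)dt = α if and only if the multiplicative translates converge weak* to α: for every φ ∈ L¹([1,∞)), lim_{r→∞} ∫₁^∞ f(rx)φ(x)dx = α·∫₁^∞ φ(x)dx. -/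
/-!
With `A(x) = x⁻¹ ∫₁ˣ f`, the substitution `t = r x` gives `∫ₐᵇ f(r x) dx = b A(r b) - a A(r a)`.
Hence if `A → α`, the translates `f(r ·)` converge against indicators of intervals, and so against
step functions. Since `|∫ f(r x) (φ - ψ)(x) dx| ≤ C ‖φ - ψ‖₁` uniformly in `r ≥ 1`, and step
functions are dense in `L¹([1, ∞))` (through continuous compactly supported functions), this extends
to every `φ ∈ L¹`.

Conversely, testing against the indicator of `[1, 2)` gives `2 A(2r) - A(r) → α`. Then `u = A - α`
is bounded and `|u(2r)| ≤ |u(r)|/2 + o(1)`, so a bound `B` on `|u|` improves to `B/2ⁿ + o(1)` for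
every `n`.
-/

open Filter MeasureTheory Set Topology

theorem tendsto_of_forall_approx_s12 {ι X : Type*} [PseudoMetricSpace X] {l : Filter ι} {u : ι → X}
    {a : X} (h : ∀ ε > 0, ∃ (v : ι → X) (b : X),
      Tendsto v l (𝓝 b) ∧ (∀ᶠ i in l, dist (u i) (v i) ≤ ε) ∧ dist a b ≤ ε) :
    Tendsto u l (𝓝 a) := by
  refine Metric.tendsto_nhds.2 fun ε hε => ?_
  obtain ⟨v, b, hv, huv, hab⟩ := h (ε / 3) (by positivity)
  filter_upwards [huv, Metric.tendsto_nhds.1 hv (ε / 3) (by positivity)] with i hui hvi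
  calc dist (u i) a ≤ dist (u i) (v i) + dist (v i) b + dist b a := dist_triangle4 _ _ _ _
    _ < ε := by rw [dist_comm b]; linarith

theorem tendsto_zero_of_tendsto_two_mul_comp_sub {u : ℝ → ℝ} {B : ℝ}
    (hB : ∀ᶠ r in atTop, |u r| ≤ B) (h : Tendsto (fun r => 2 * u (2 * r) - u r) atTop (𝓝 0)) :
    Tendsto u atTop (𝓝 0) := by
  have halving : ∀ δ > 0, ∀ n : ℕ, ∀ᶠ r in atTop, |u r| ≤ B / 2 ^ n + δ := by
    intro δ hδ n
    induction n with
    | zero => filter_upwards [hB] with r hr using by rw [pow_zero, div_one]; linarith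
    | succ n ih =>
      have hsmall : ∀ᶠ r in atTop, |2 * u (2 * r) - u r| < δ := by
        simpa only [Real.dist_0_eq_abs] using Metric.tendsto_nhds.1 h δ hδ
      have hdouble : ∀ᶠ r in atTop, |u (2 * r)| ≤ B / 2 ^ (n + 1) + δ := by
        filter_upwards [ih, hsmall] with r hr hr'
        rw [pow_succ, ← div_div]
        rw [abs_le] at hr ⊢
        rw [abs_lt] at hr'
        constructor <;> linarith
      filter_upwards [(tendsto_id.atTop_div_const two_pos).eventually hdouble] with s hs
      rwa [id, mul_div_cancel₀ s two_ne_zero] at hs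
  refine Metric.tendsto_nhds.2 fun ε hε => ?_
  obtain ⟨n, hn⟩ := pow_unbounded_of_one_lt (2 * B / ε) one_lt_two
  have hBn : B / 2 ^ n < ε / 2 := by
    rw [div_lt_iff₀ (by positivity)]
    rw [div_lt_iff₀ hε] at hn
    linarith
  filter_upwards [halving (ε / 2) (half_pos hε) n] with r hr
  rw [Real.dist_0_eq_abs]
  linarith

theorem abs_setIntegral_mul_le {X : Type*} [MeasurableSpace X] {μ : Measure X} {s : Set X}
    {g φ : X → ℝ} {C : ℝ} (hs : MeasurableSet s) (hg : ∀ x ∈ s, |g x| ≤ C)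
    (hφ : IntegrableOn φ s μ) : |∫ x in s, g x * φ x ∂μ| ≤ C * ∫ x in s, |φ x| ∂μ := by
  rw [← Real.norm_eq_abs, ← integral_const_mul]
  refine norm_integral_le_of_norm_le (hφ.norm.const_mul C)
    (ae_restrict_of_forall_mem hs fun x hx => ?_)
  rw [norm_mul, Real.norm_eq_abs, Real.norm_eq_abs]
  exact mul_le_mul_of_nonneg_right (hg x hx) (abs_nonneg _)

theorem setIntegral_mul_indicator_Ico (g : ℝ → ℝ) (c : ℝ) {a₀ a b : ℝ} (ha : a₀ ≤ a) :
    ∫ x in Ici a₀, g x * (Ico a b).indicator (fun _ => c) x = c * ∫ x in Ico a b, g x := by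
  have hsub : Ico a b ∩ Ici a₀ = Ico a b := inter_eq_left.2 fun x hx => ha.trans hx.1
  simp_rw [← indicator_mul_right]
  rw [integral_indicator measurableSet_Ico, Measure.restrict_restrict measurableSet_Ico, hsub,
    integral_mul_const, mul_comm]

theorem setIntegral_indicator_Ico (c : ℝ) {a₀ a b : ℝ} (ha : a₀ ≤ a) (hab : a ≤ b) :
    ∫ x in Ici a₀, (Ico a b).indicator (fun _ => c) x = c * (b - a) := by
  have h := setIntegral_mul_indicator_Ico (fun _ => (1 : ℝ)) c (b := b) ha
  simp only [one_mul] at h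
  rw [h, setIntegral_const, smul_eq_mul, mul_one, Real.volume_real_Ico_of_le hab]

theorem integrable_indicator_Ico (a b c : ℝ) : Integrable ((Ico a b).indicator fun _ => c) :=
  (integrable_indicator_iff measurableSet_Ico).2 (integrableOn_const measure_Ico_lt_top.ne)

noncomputable def stepApprox (g : ℝ → ℝ) (a Δ : ℝ) (n : ℕ) (x : ℝ) : ℝ :=
  ∑ j ∈ Finset.range n, (Ico (a + j * Δ) (a + (j + 1) * Δ)).indicator (fun _ => g (a + j * Δ)) x

section StepApprox

variable {g : ℝ → ℝ} {a Δ x : ℝ} {n : ℕ}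

theorem mem_Ico_add_mul_iff (hΔ : 0 < Δ) (j : ℕ) :
    x ∈ Ico (a + j * Δ) (a + (j + 1) * Δ) ↔ a ≤ x ∧ ⌊(x - a) / Δ⌋₊ = j := by
  constructor
  · rintro ⟨hlo, hhi⟩
    have ha : a ≤ x := le_trans (by nlinarith [j.cast_nonneg (α := ℝ)]) hlo
    refine ⟨ha, (Nat.floor_eq_iff (div_nonneg (by linarith) hΔ.le)).2 ⟨?_, ?_⟩⟩
    · rw [le_div_iff₀ hΔ]; linarith
    · rw [div_lt_iff₀ hΔ]; linarith
  · rintro ⟨ha, hj⟩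
    obtain ⟨hlo, hhi⟩ := (Nat.floor_eq_iff (div_nonneg (by linarith) hΔ.le)).1 hj
    rw [le_div_iff₀ hΔ] at hlo
    rw [div_lt_iff₀ hΔ] at hhi
    constructor <;> linarith

theorem stepApprox_eq_of_mem (hΔ : 0 < Δ) {j : ℕ} (hj : j < n)
    (hx : x ∈ Ico (a + j * Δ) (a + (j + 1) * Δ)) : stepApprox g a Δ n x = g (a + j * Δ) := by
  rw [stepApprox, Finset.sum_eq_single_of_mem j (Finset.mem_range.2 hj), indicator_of_mem hx]
  intro i _ hij
  refine indicator_of_notMem (fun hi => hij ?_) _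
  rw [mem_Ico_add_mul_iff hΔ] at hi hx
  exact hi.2.symm.trans hx.2

theorem stepApprox_eq_zero (hΔ : 0 < Δ) (hx : x ∉ Ico a (a + n * Δ)) :
    stepApprox g a Δ n x = 0 := by
  refine Finset.sum_eq_zero fun j hj => indicator_of_notMem (fun hjx => hx ⟨?_, ?_⟩) _
  · nlinarith [hjx.1, j.cast_nonneg (α := ℝ)]
  · have : (j : ℝ) + 1 ≤ n := by exact_mod_cast Finset.mem_range.1 hj
    nlinarith [hjx.2]

theorem abs_sub_stepApprox_le {δ ε : ℝ} (hg : ∀ x y, dist x y < δ → dist (g x) (g y) < ε)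
    (hΔ : 0 < Δ) (hΔδ : Δ < δ) (hx : x ∈ Ico a (a + n * Δ)) :
    |g x - stepApprox g a Δ n x| ≤ ε := by
  set j := ⌊(x - a) / Δ⌋₊
  have hxj : x ∈ Ico (a + j * Δ) (a + (j + 1) * Δ) := (mem_Ico_add_mul_iff hΔ j).2 ⟨hx.1, rfl⟩
  have hjn : j < n := by
    by_contra! hnj
    have : (n : ℝ) ≤ j := by exact_mod_cast hnj
    nlinarith [hxj.1, hx.2]
  rw [stepApprox_eq_of_mem hΔ hjn hxj, ← Real.dist_eq]
  refine (hg _ _ ?_).le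
  rw [Real.dist_eq, abs_of_nonneg (by linarith [hxj.1])]
  linarith [hxj.2]

theorem exists_setIntegral_abs_sub_stepApprox_le (hg : Continuous g) (hgs : HasCompactSupport g)
    (a : ℝ) {ε : ℝ} (hε : 0 < ε) :
    ∃ Δ > 0, ∃ n : ℕ, ∫ x in Ici a, |g x - stepApprox g a Δ n x| ≤ ε := by
  obtain ⟨R, hR, hgR⟩ := hgs.exists_pos_le_norm
  -- `a + L ≥ R`, so `g` vanishes on `[a + L, ∞)`
  set L := R + |a|
  have hL : 0 < L := by positivity
  obtain ⟨δ, hδ, hgδ⟩ := Metric.uniformContinuous_iff.1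
    (hgs.uniformContinuous_of_continuous hg) (ε / L) (by positivity)
  obtain ⟨n, hn⟩ := exists_nat_gt (L / δ)
  have hn0 : (0 : ℝ) < n := lt_trans (by positivity) hn
  have hnΔ : n * (L / n) = L := mul_div_cancel₀ L hn0.ne'
  have hΔδ : L / n < δ := by
    rw [div_lt_iff₀ hn0]
    linarith [(div_lt_iff₀ hδ).1 hn]
  refine ⟨L / n, by positivity, n, ?_⟩
  have hout : ∀ x ∈ Ici a \ Ico a (a + L), |g x - stepApprox g a (L / n) n x| = 0 := by
    rintro x ⟨hax, hxL⟩
    have hLx : a + L ≤ x := by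
      by_contra! h
      exact hxL ⟨hax, h⟩
    rw [hgR x (by rw [Real.norm_eq_abs]; linarith [le_abs_self x, neg_abs_le a]),
      stepApprox_eq_zero (by positivity) (by rwa [hnΔ]), sub_zero, abs_zero]
  rw [setIntegral_eq_of_subset_of_forall_sdiff_eq_zero measurableSet_Ici Ico_subset_Ici_self hout]
  calc ∫ x in Ico a (a + L), |g x - stepApprox g a (L / n) n x|
      ≤ ‖∫ x in Ico a (a + L), |g x - stepApprox g a (L / n) n x|‖ := le_abs_self _
    _ ≤ ε / L * volume.real (Ico a (a + L)) :=
      norm_setIntegral_le_of_norm_le_const measure_Ico_lt_top fun x hx => by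
        rw [Real.norm_eq_abs, abs_abs]
        exact abs_sub_stepApprox_le (fun _ _ h => hgδ h) (by positivity) hΔδ (by rwa [hnΔ])
    _ = ε := by
      rw [Real.volume_real_Ico_of_le (by linarith), add_sub_cancel_left]
      field_simp

theorem integrable_stepApprox : Integrable (stepApprox g a Δ n) :=
  integrable_finsetSum _ fun _ _ => integrable_indicator_Ico _ _ _

end StepApprox

noncomputable def cesaroMean (f : ℝ → ℝ) (x : ℝ) : ℝ := (∫ t in (1 : ℝ)..x, f t) / x

section MulTranslates

variable {f : ℝ → ℝ} {C α : ℝ}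

theorem intervalIntegrable_of_abs_le (hm : Measurable f) (hb : ∀ x ≥ (1 : ℝ), |f x| ≤ C)
    {u v : ℝ} (hu : 1 ≤ u) (hv : 1 ≤ v) : IntervalIntegrable f volume u v := by
  rw [intervalIntegrable_iff]
  refine Measure.integrableOn_of_bounded (M := C) measure_Ioc_lt_top.ne hm.aestronglyMeasurable
    (ae_restrict_of_forall_mem measurableSet_uIoc fun x hx => ?_)
  exact hb x ((le_min hu hv).trans hx.1.le)

theorem abs_cesaroMean_le (hb : ∀ x ≥ (1 : ℝ), |f x| ≤ C) {x : ℝ} (hx : 1 ≤ x) :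
    |cesaroMean f x| ≤ C := by
  have hC : 0 ≤ C := (abs_nonneg _).trans (hb 1 le_rfl)
  have hint : ‖∫ t in (1 : ℝ)..x, f t‖ ≤ C * |x - 1| :=
    intervalIntegral.norm_integral_le_of_norm_le_const fun t ht =>
      hb t (by rw [uIoc_of_le hx] at ht; exact ht.1.le)
  rw [Real.norm_eq_abs, abs_of_nonneg (by linarith : 0 ≤ x - 1)] at hint
  rw [cesaroMean, abs_div, abs_of_pos (by linarith : 0 < x), div_le_iff₀ (by linarith)]
  nlinarith

theorem integral_Ico_comp_mul (hm : Measurable f) (hb : ∀ x ≥ (1 : ℝ), |f x| ≤ C)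
    {a b r : ℝ} (ha : 1 ≤ a) (hab : a ≤ b) (hr : 1 ≤ r) :
    ∫ x in Ico a b, f (r * x) = b * cesaroMean f (r * b) - a * cesaroMean f (r * a) := by
  have hr0 : 0 < r := by linarith
  have hb0 : b ≠ 0 := by linarith
  have hra : 1 ≤ r * a := one_le_mul_of_one_le_of_one_le hr ha
  have hrb : 1 ≤ r * b := one_le_mul_of_one_le_of_one_le hr (ha.trans hab)
  rw [integral_Ico_eq_integral_Ioo, ← integral_Ioc_eq_integral_Ioo,
    ← intervalIntegral.integral_of_le hab, intervalIntegral.integral_comp_mul_left _ hr0.ne',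
    ← intervalIntegral.integral_interval_sub_left (intervalIntegrable_of_abs_le hm hb le_rfl hrb)
      (intervalIntegrable_of_abs_le hm hb le_rfl hra), cesaroMean, cesaroMean, smul_eq_mul]
  field_simp

theorem tendsto_integral_Ico_comp_mul (hm : Measurable f) (hb : ∀ x ≥ (1 : ℝ), |f x| ≤ C)
    (hα : Tendsto (cesaroMean f) atTop (𝓝 α)) {a b : ℝ} (ha : 1 ≤ a) (hab : a ≤ b) :
    Tendsto (fun r => ∫ x in Ico a b, f (r * x)) atTop (𝓝 (α * (b - a))) := by
  have hlim : ∀ c > 0, Tendsto (fun r => c * cesaroMean f (r * c)) atTop (𝓝 (c * α)) :=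
    fun c hc => (hα.comp (tendsto_id.atTop_mul_const hc)).const_mul c
  have := (hlim b (by linarith)).sub (hlim a (by linarith))
  rw [show b * α - a * α = α * (b - a) by ring] at this
  refine this.congr' ?_
  filter_upwards [eventually_ge_atTop 1] with r hr
  exact (integral_Ico_comp_mul hm hb ha hab hr).symm

theorem tendsto_cesaroMean_of_tendsto_integral_Ico (hm : Measurable f)
    (hb : ∀ x ≥ (1 : ℝ), |f x| ≤ C)
    (h : Tendsto (fun r => ∫ x in Ico 1 2, f (r * x)) atTop (𝓝 α)) :
    Tendsto (cesaroMean f) atTop (𝓝 α) := by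
  rw [← tendsto_sub_nhds_zero_iff]
  refine tendsto_zero_of_tendsto_two_mul_comp_sub (B := C + |α|) ?_ ?_
  · filter_upwards [eventually_ge_atTop 1] with r hr
    linarith [abs_sub (cesaroMean f r) α, abs_cesaroMean_le hb hr]
  · rw [← sub_self α]
    refine (h.sub_const α).congr' ?_
    filter_upwards [eventually_ge_atTop 1] with r hr
    rw [integral_Ico_comp_mul hm hb le_rfl one_le_two hr, mul_comm r 2, mul_one]
    ring

def MulTranslatesTendsto (f : ℝ → ℝ) (α : ℝ) (φ : ℝ → ℝ) : Prop :=
  Tendsto (fun r : ℝ => ∫ x in Ici (1 : ℝ), f (r * x) * φ x) atTop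
    (𝓝 (α * ∫ x in Ici (1 : ℝ), φ x))

theorem abs_comp_mul_le (hb : ∀ x ≥ (1 : ℝ), |f x| ≤ C) {r : ℝ} (hr : 1 ≤ r) :
    ∀ x ∈ Ici (1 : ℝ), |f (r * x)| ≤ C :=
  fun _ hx => hb _ (one_le_mul_of_one_le_of_one_le hr hx)

theorem integrableOn_comp_mul_mul (hm : Measurable f) (hb : ∀ x ≥ (1 : ℝ), |f x| ≤ C)
    {φ : ℝ → ℝ} (hφ : IntegrableOn φ (Ici 1)) {r : ℝ} (hr : 1 ≤ r) :
    IntegrableOn (fun x => f (r * x) * φ x) (Ici 1) :=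
  hφ.bdd_mul (hm.comp (measurable_const_mul r)).aestronglyMeasurable
    (ae_restrict_of_forall_mem measurableSet_Ici (abs_comp_mul_le hb hr))

theorem mulTranslatesTendsto_indicator_Ico (hm : Measurable f) (hb : ∀ x ≥ (1 : ℝ), |f x| ≤ C)
    (hα : Tendsto (cesaroMean f) atTop (𝓝 α)) {a b : ℝ} (ha : 1 ≤ a) (hab : a ≤ b) (c : ℝ) :
    MulTranslatesTendsto f α ((Ico a b).indicator fun _ => c) := by
  rw [MulTranslatesTendsto, setIntegral_indicator_Ico c ha hab]
  simp_rw [setIntegral_mul_indicator_Ico _ c ha]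
  convert (tendsto_integral_Ico_comp_mul hm hb hα ha hab).const_mul c using 2
  ring

theorem MulTranslatesTendsto.finset_sum (hm : Measurable f) (hb : ∀ x ≥ (1 : ℝ), |f x| ≤ C)
    {ι : Type*} (s : Finset ι) {ψ : ι → ℝ → ℝ} (hint : ∀ i ∈ s, IntegrableOn (ψ i) (Ici 1))
    (h : ∀ i ∈ s, MulTranslatesTendsto f α (ψ i)) :
    MulTranslatesTendsto f α (fun x => ∑ i ∈ s, ψ i x) := by
  rw [MulTranslatesTendsto, integral_finsetSum s hint, Finset.mul_sum]
  refine (tendsto_finsetSum s h).congr' ?_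
  filter_upwards [eventually_ge_atTop 1] with r hr
  simp_rw [Finset.mul_sum]
  exact (integral_finsetSum s fun i hi => integrableOn_comp_mul_mul hm hb (hint i hi) hr).symm

theorem MulTranslatesTendsto.of_forall_approx (hm : Measurable f)
    (hb : ∀ x ≥ (1 : ℝ), |f x| ≤ C) {φ : ℝ → ℝ} (hφ : IntegrableOn φ (Ici 1))
    (h : ∀ ε > 0, ∃ ψ, IntegrableOn ψ (Ici 1) ∧ MulTranslatesTendsto f α ψ ∧
      ∫ x in Ici 1, |φ x - ψ x| ≤ ε) :
    MulTranslatesTendsto f α φ := by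
  have hC : 0 ≤ C := (abs_nonneg _).trans (hb 1 le_rfl)
  refine tendsto_of_forall_approx_s12 fun ε hε => ?_
  obtain ⟨ψ, hψ, hψα, hφψ⟩ := h (ε / (C + |α| + 1)) (by positivity)
  have hK : ∀ K, 0 ≤ K → K ≤ C + |α| → K * ∫ x in Ici 1, |φ x - ψ x| ≤ ε := fun K hK hKC =>
    calc K * ∫ x in Ici 1, |φ x - ψ x| ≤ K * (ε / (C + |α| + 1)) := by gcongr
      _ ≤ (C + |α| + 1) * (ε / (C + |α| + 1)) := by gcongr; linarith
      _ = ε := by field_simp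
  refine ⟨_, _, hψα, ?_, ?_⟩
  · filter_upwards [eventually_ge_atTop 1] with r hr
    rw [Real.dist_eq, ← integral_sub (integrableOn_comp_mul_mul hm hb hφ hr)
      (integrableOn_comp_mul_mul hm hb hψ hr)]
    simp_rw [← mul_sub]
    exact (abs_setIntegral_mul_le measurableSet_Ici (abs_comp_mul_le hb hr) (hφ.sub hψ)).trans
      (hK C hC (by linarith [abs_nonneg α]))
  · rw [Real.dist_eq, ← mul_sub, ← integral_sub hφ hψ, ← integral_const_mul]
    exact (abs_setIntegral_mul_le (g := fun _ => α) measurableSet_Ici (fun _ _ => le_rfl)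
      (hφ.sub hψ)).trans (hK |α| (abs_nonneg α) (by linarith))

theorem MulTranslatesTendsto.stepApprox (hm : Measurable f) (hb : ∀ x ≥ (1 : ℝ), |f x| ≤ C)
    (hα : Tendsto (cesaroMean f) atTop (𝓝 α)) (g : ℝ → ℝ) {a Δ : ℝ} (ha : 1 ≤ a) (hΔ : 0 < Δ)
    (n : ℕ) : MulTranslatesTendsto f α (stepApprox g a Δ n) :=
  MulTranslatesTendsto.finset_sum hm hb _ (fun _ _ => (integrable_indicator_Ico _ _ _).integrableOn)
    fun j _ => mulTranslatesTendsto_indicator_Ico hm hb hα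
      (by nlinarith [j.cast_nonneg (α := ℝ)]) (by nlinarith) _

theorem mulTranslatesTendsto_of_continuous (hm : Measurable f) (hb : ∀ x ≥ (1 : ℝ), |f x| ≤ C)
    (hα : Tendsto (cesaroMean f) atTop (𝓝 α)) {g : ℝ → ℝ} (hg : Continuous g)
    (hgs : HasCompactSupport g) : MulTranslatesTendsto f α g :=
  MulTranslatesTendsto.of_forall_approx hm hb (hg.integrable_of_hasCompactSupport hgs).integrableOn
    fun ε hε => by
      obtain ⟨Δ, hΔ, n, hgn⟩ := exists_setIntegral_abs_sub_stepApprox_le hg hgs 1 hε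
      exact ⟨stepApprox g 1 Δ n, integrable_stepApprox.integrableOn,
        MulTranslatesTendsto.stepApprox hm hb hα g le_rfl hΔ n, hgn⟩

theorem mulTranslatesTendsto_of_integrableOn (hm : Measurable f) (hb : ∀ x ≥ (1 : ℝ), |f x| ≤ C)
    (hα : Tendsto (cesaroMean f) atTop (𝓝 α)) {φ : ℝ → ℝ} (hφ : IntegrableOn φ (Ici 1)) :
    MulTranslatesTendsto f α φ := by
  have hφ' : Integrable ((Ici 1).indicator φ) := (integrable_indicator_iff measurableSet_Ici).2 hφ
  refine MulTranslatesTendsto.of_forall_approx hm hb hφ fun ε hε => ?_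
  obtain ⟨g, hgs, hφg, hg, hgi⟩ := hφ'.exists_hasCompactSupport_integral_sub_le hε
  refine ⟨g, hgi.integrableOn, mulTranslatesTendsto_of_continuous hm hb hα hg hgs, ?_⟩
  calc ∫ x in Ici 1, |φ x - g x| = ∫ x in Ici 1, ‖(Ici 1).indicator φ x - g x‖ :=
        setIntegral_congr_fun measurableSet_Ici fun x hx => by
          rw [indicator_of_mem hx, Real.norm_eq_abs]
    _ ≤ ∫ x, ‖(Ici 1).indicator φ x - g x‖ :=
        setIntegral_le_integral (hφ'.sub hgi).norm (Eventually.of_forall fun _ => norm_nonneg _)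
    _ ≤ ε := hφg

end MulTranslates

/-- For `f ∈ L^∞([1,∞))`: `M(f) = α` iff the multiplicative translates
`f(r·)` converge weak* in `L^∞([1,∞))` to the constant `α`. -/
theorem cesaro_iff_weakStar_mul_translates (f : ℝ → ℝ) (C α : ℝ)
    (hm : Measurable f) (hb : ∀ x ≥ (1 : ℝ), |f x| ≤ C) :
    Tendsto (fun x : ℝ => (∫ t in (1 : ℝ)..x, f t) / x) atTop (𝓝 α) ↔
    (∀ φ : ℝ → ℝ, IntegrableOn φ (Ici (1 : ℝ)) →
      Tendsto (fun r : ℝ => ∫ x in Ici (1 : ℝ), f (r * x) * φ x) atTop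
        (𝓝 (α * ∫ x in Ici (1 : ℝ), φ x))) := by
  refine ⟨fun hα φ hφ => mulTranslatesTendsto_of_integrableOn hm hb hα hφ, fun h => ?_⟩
  refine tendsto_cesaroMean_of_tendsto_integral_Ico hm hb ?_
  have h12 := h _ (integrable_indicator_Ico 1 2 1).integrableOn
  norm_num [setIntegral_mul_indicator_Ico _ 1 le_rfl,
    setIntegral_indicator_Ico 1 le_rfl one_le_two] at h12
  exact h12
end
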